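/- arXiv:2304.02608 — 8 statements merged into one kernel-verified Lean document; each statement's English description precedes it below -/
import Mathlib

section
/- Let $w$ be analytic in the open unit disc $\mathbb{D}$ with $w(0)=0$. If for some $z_0 \in \mathbb{D}$ one has $\max_{|z| \le |z_0|} |w(z)| = |w(z_0)|$ with $w(z_0) \ne 0$, then $z_0 w'(z_0)/w(z_0)$ is a real number and $z_0 w'(z_0)/w(z_0) \ge 1$. -/
/-!
The quotient `g z = w z / z` satisfies `|g| ≤ |g z₀|` on the closed disc of radius `|z₀|`: on its
boundary circle this is the hypothesis, inside it is the Schwarz lemma. So `|g|²` has a maximum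
at `z₀` on that disc, and its real derivative at `z₀` is nonpositive in every direction pointing
into the disc; this forces `z₀ g'(z₀) / g(z₀)` to be a nonnegative real number. Finally
`z₀ w'(z₀) / w(z₀) = 1 + z₀ g'(z₀) / g(z₀)`.
-/

open Metric Set
open scoped ComplexOrder

namespace Complex

theorem nonneg_of_forall_re_mul_sub_one_nonpos {b : ℂ}
    (h : ∀ l ∈ closedBall (0 : ℂ) 1, (b * (l - 1)).re ≤ 0) : 0 ≤ b := by
  have hl : (starRingEnd ℂ b / ‖b‖ : ℂ) ∈ closedBall (0 : ℂ) 1 := by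
    rw [mem_closedBall_zero_iff, norm_div, norm_conj, norm_real, norm_norm]
    exact div_self_le_one _
  have hre : (b * (starRingEnd ℂ b / ‖b‖)).re = ‖b‖ := by
    rw [mul_div_assoc', mul_conj, normSq_eq_norm_sq, ← ofReal_div, ofReal_re, sq,
      mul_self_div_self]
  have hle := h _ hl
  rw [mul_sub, mul_one, sub_re, hre] at hle
  exact re_eq_norm.mp (le_antisymm (re_le_norm b) (by linarith))

theorem zero_le_mul_deriv_div_of_isMaxOn_norm {g : ℂ → ℂ} {z₀ : ℂ}
    (hg : DifferentiableAt ℂ g z₀) (hne : g z₀ ≠ 0)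
    (hmax : IsMaxOn (fun z => ‖g z‖) (closedBall 0 ‖z₀‖) z₀) :
    0 ≤ z₀ * deriv g z₀ / g z₀ := by
  have hsq : IsLocalMaxOn (fun z => ‖g z‖ ^ 2) (closedBall 0 ‖z₀‖) z₀ :=
    IsMaxOn.localize fun z hz => pow_le_pow_left₀ (norm_nonneg _) (hmax hz) 2
  have hderiv := (hg.hasDerivAt.hasFDerivAt.restrictScalars ℝ).norm_sq
  refine nonneg_of_forall_re_mul_sub_one_nonpos fun l hl => ?_
  have hz : z₀ * l ∈ closedBall 0 ‖z₀‖ := by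
    rw [mem_closedBall_zero_iff, norm_mul]
    exact mul_le_of_le_one_right (norm_nonneg _) (mem_closedBall_zero_iff.mp hl)
  have hnonpos := hsq.hasFDerivWithinAt_nonpos hderiv.hasFDerivWithinAt
    (sub_mem_posTangentConeAt_of_segment_subset
      ((convex_closedBall 0 ‖z₀‖).segment_subset (mem_closedBall_zero_iff.mpr le_rfl) hz))
  have hinner : inner ℝ (g z₀) ((z₀ * l - z₀) • deriv g z₀)
      = ‖g z₀‖ ^ 2 * (z₀ * deriv g z₀ / g z₀ * (l - 1)).re := by
    rw [smul_eq_mul, Complex.inner, ← normSq_eq_norm_sq, ← re_ofReal_mul, ← mul_conj]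
    congr 1
    field_simp
  simp only [FunLike.coe_smul, ContinuousLinearMap.coe_comp, Pi.smul_apply, Function.comp_apply,
    ContinuousLinearMap.coe_restrictScalars', ContinuousLinearMap.toSpanSingleton_apply,
    innerSL_apply_apply, nsmul_eq_mul, Nat.cast_ofNat, hinner, ← mul_assoc] at hnonpos
  exact nonpos_of_mul_nonpos_right hnonpos (by positivity)

theorem norm_le_div_mul_norm_of_mapsTo_closedBall {w : ℂ → ℂ} {r M : ℝ} {z : ℂ}
    (hw : DifferentiableOn ℂ w (ball 0 r)) (h0 : w 0 = 0)
    (hmaps : MapsTo w (closedBall 0 r) (closedBall 0 M)) (hz : z ∈ closedBall 0 r) :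
    ‖w z‖ ≤ M / r * ‖z‖ := by
  rcases (mem_closedBall_zero_iff.mp hz).lt_or_eq with hlt | heq
  · have hmaps' : MapsTo w (ball 0 r) (closedBall (w 0) M) := by
      rw [h0]
      exact hmaps.mono_left ball_subset_closedBall
    simpa [h0] using dist_le_div_mul_dist_of_mapsTo_ball hw hmaps' (mem_ball_zero_iff.mpr hlt)
  · rcases eq_or_ne r 0 with rfl | hr
    · simp [norm_eq_zero.mp heq, h0]
    · rw [heq, div_mul_cancel₀ _ hr]
      exact mem_closedBall_zero_iff.mp (hmaps hz)

end Complex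

open Complex

/-- Jack's lemma. -/
theorem jack_lemma (w : ℂ → ℂ) (hw : AnalyticOn ℂ w (ball (0:ℂ) 1))
    (h0 : w 0 = 0) (z₀ : ℂ) (hz₀ : z₀ ∈ ball (0:ℂ) 1)
    (hmax : ∀ z ∈ closedBall (0:ℂ) ‖z₀‖, ‖w z‖ ≤ ‖w z₀‖)
    (hne : w z₀ ≠ 0) :
    (z₀ * deriv w z₀ / w z₀).im = 0 ∧ 1 ≤ (z₀ * deriv w z₀ / w z₀).re := by
  have hz₀ne : z₀ ≠ 0 := by
    rintro rfl
    exact hne h0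
  have hdiff : DifferentiableOn ℂ w (ball 0 1) := hw.differentiableOn
  have hschwarz (z : ℂ) (hz : z ∈ closedBall 0 ‖z₀‖) : ‖w z‖ ≤ ‖w z₀‖ / ‖z₀‖ * ‖z‖ :=
    norm_le_div_mul_norm_of_mapsTo_closedBall
      (hdiff.mono (ball_subset_ball (mem_ball_zero_iff.mp hz₀).le)) h0
      (fun z hz => mem_closedBall_zero_iff.mpr (hmax z hz)) hz
  have hgmax : IsMaxOn (fun z => ‖w z / z‖) (closedBall 0 ‖z₀‖) z₀ := fun z hz => by
    simp only [mem_ofPred_eq, norm_div]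
    exact div_le_of_le_mul₀ (norm_nonneg _) (by positivity) (mul_comm ‖z‖ _ ▸ hschwarz z hz)
  have hderiv : HasDerivAt (fun z => w z / z) ((deriv w z₀ * z₀ - w z₀ * 1) / z₀ ^ 2) z₀ :=
    (hdiff.differentiableAt (isOpen_ball.mem_nhds hz₀)).hasDerivAt.div (hasDerivAt_id z₀) hz₀ne
  have hlogDeriv : z₀ * deriv (fun z => w z / z) z₀ / (w z₀ / z₀)
      = z₀ * deriv w z₀ / w z₀ - 1 := by
    rw [hderiv.deriv]
    field_simp
  have hnonneg := zero_le_mul_deriv_div_of_isMaxOn_norm hderiv.differentiableAt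
    (div_ne_zero hne hz₀ne) hgmax
  rw [hlogDeriv, nonneg_iff] at hnonneg
  simp only [sub_re, one_re, sub_im, one_im, sub_zero, sub_nonneg] at hnonneg
  exact ⟨hnonneg.2.symm, hnonneg.1⟩
end

section
/- For every $\theta \in (-\pi, \pi]$, one has $|\sinh(e^{i\theta/2})| \ge \sin 1$, with equality when $\theta = \pi$ (i.e., at the point $e^{i\pi/2} = i$, where $|\sinh(i)| = \sin 1$). -/
/-!
Write `z = x + iy` with `x² + y² = 1`, so that `‖sinh z‖² = sinh² x + sin² y`.
Since `|sinh x| ≥ |x|` and, by concavity of `sin` on `[0, 1]`, `|sin y| ≥ |y| sin 1`,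
this is at least `(x² + y²) sin² 1 = sin² 1`. At `z = i` the bound is attained.
-/

open Real Set

lemma abs_mul_sin_one_le_abs_sin {t : ℝ} (ht : |t| ≤ 1) : |t * sin 1| ≤ |sin t| := by
  have hsin1 : 0 ≤ sin 1 := (sin_pos_of_pos_of_le_one one_pos le_rfl).le
  have chord := strictConcaveOn_sin_Icc.concaveOn.2 (x := 0) (y := 1) ⟨le_rfl, pi_pos.le⟩
    ⟨zero_le_one, by linarith [pi_gt_three]⟩ (sub_nonneg.2 ht) (abs_nonneg t) (by ring)
  rw [abs_mul, abs_of_nonneg hsin1, abs_sin_eq_sin_abs_of_abs_le_pi (by linarith [pi_gt_three])]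
  simpa only [smul_eq_mul, sin_zero, mul_zero, zero_add, mul_one] using chord

lemma abs_mul_sin_one_le_abs_sinh (t : ℝ) : |t * sin 1| ≤ |sinh t| := calc
  |t * sin 1| = |t| * |sin 1| := abs_mul t (sin 1)
  _ ≤ |t| := mul_le_of_le_one_right (abs_nonneg t) (abs_sin_le_one 1)
  _ ≤ |sinh t| := abs_sinh t ▸ self_le_sinh_iff.2 (abs_nonneg t)

lemma Complex.sq_norm_sinh (z : ℂ) :
    ‖sinh z‖ ^ 2 = Real.sinh z.re ^ 2 + Real.sin z.im ^ 2 := by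
  have hsinh : sinh z = (Real.sinh z.re * Real.cos z.im : ℝ)
      + (Real.cosh z.re * Real.sin z.im : ℝ) * I := by
    conv_lhs => rw [← re_add_im z]
    rw [sinh_add, sinh_mul_I, cosh_mul_I]
    push_cast
    ring
  rw [hsinh, Complex.sq_norm, normSq_add_mul_I]
  nlinarith [Real.sin_sq_add_cos_sq z.im, Real.cosh_sq z.re]

lemma sin_one_le_norm_sinh_of_norm_eq_one {z : ℂ} (hz : ‖z‖ = 1) :
    sin 1 ≤ ‖Complex.sinh z‖ := by
  have hsq : z.re ^ 2 + z.im ^ 2 = 1 := by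
    linarith [hz ▸ Complex.sq_norm_sub_sq_re z]
  have him : |z.im * sin 1| ≤ |sin z.im| :=
    abs_mul_sin_one_le_abs_sin (hz ▸ Complex.abs_im_le_norm z)
  have h : sin 1 ^ 2 ≤ ‖Complex.sinh z‖ ^ 2 := calc
    sin 1 ^ 2 = (z.re * sin 1) ^ 2 + (z.im * sin 1) ^ 2 := by
      rw [mul_pow, mul_pow, ← add_mul, hsq, one_mul]
    _ ≤ sinh z.re ^ 2 + sin z.im ^ 2 :=
      add_le_add (sq_le_sq.2 (abs_mul_sin_one_le_abs_sinh z.re)) (sq_le_sq.2 him)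
    _ = ‖Complex.sinh z‖ ^ 2 := (Complex.sq_norm_sinh z).symm
  exact abs_le_of_sq_le_sq' h (norm_nonneg _) |>.2

theorem sinh_boundary_bound :
    (∀ θ ∈ Ioc (-π) π, Real.sin 1 ≤ ‖Complex.sinh (Complex.exp ((θ / 2 : ℂ) * Complex.I))‖) ∧
      ‖Complex.sinh Complex.I‖ = Real.sin 1 := by
  refine ⟨fun θ _ ↦ sin_one_le_norm_sinh_of_norm_eq_one ?_, ?_⟩
  · exact_mod_cast Complex.norm_exp_ofReal_mul_I (θ / 2)
  · have hsinh_I : Complex.sinh Complex.I = (sin 1 : ℝ) * Complex.I := by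
      simpa using Complex.sinh_mul_I 1
    rw [hsinh_I, norm_mul, Complex.norm_I, mul_one, Complex.norm_real,
      norm_of_nonneg (sin_pos_of_pos_of_le_one one_pos le_rfl).le]
end

section
/- For $\xi = e^{i\theta}$ with $\theta \in (-\pi,\pi]$ and $\sqrt{\xi} = e^{i\theta/2}$, one has $|\tanh(e^{i\theta/2})| \ge \min\{\tanh 1, \tan 1\} = \tanh 1$. -/
open Real Set

set_option maxHeartbeats 1000000

lemma sinh_le_aux {x : ℝ} (h0 : 0 ≤ x) (h1 : x ≤ 1) : Real.sinh x ≤ 1.3592 * x := by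
  have hexp : Real.exp x ≤ (1 - x) * 1 + x * Real.exp 1 := by
    have := convexOn_exp.2 (Set.mem_univ (0:ℝ)) (Set.mem_univ (1:ℝ))
      (by linarith : (0:ℝ) ≤ 1 - x) h0 (by ring)
    simpa [Real.exp_zero, smul_eq_mul] using this
  have hexp2 : 1 - x ≤ Real.exp (-x) := by
    have := Real.add_one_le_exp (-x); linarith
  have he : Real.exp 1 < 2.7182818286 := Real.exp_one_lt_d9
  rw [Real.sinh_eq]
  nlinarith

lemma exp_neg_one_lb : 0.3678794411 < Real.exp (-1) := by
  have he : Real.exp 1 < 2.7182818286 := Real.exp_one_lt_d9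
  have hpos : (0:ℝ) < Real.exp 1 := Real.exp_pos 1
  rw [Real.exp_neg]
  rw [lt_inv_comm₀ (by norm_num) hpos]
  calc Real.exp 1 < 2.7182818286 := he
    _ ≤ (0.3678794411)⁻¹ := by norm_num

lemma exp_neg_one_ub : Real.exp (-1) < 0.3678794412 := by
  have he : 2.7182818283 < Real.exp 1 := Real.exp_one_gt_d9
  have hpos : (0:ℝ) < Real.exp 1 := Real.exp_pos 1
  rw [Real.exp_neg, inv_lt_comm₀ hpos (by norm_num)]
  calc (0.3678794412:ℝ)⁻¹ ≤ 2.7182818283 := by norm_num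
    _ < Real.exp 1 := he

lemma sinh_one_ub : Real.sinh 1 ≤ 1.17521 := by
  have h1 := Real.exp_one_lt_d9; have h2 := exp_neg_one_lb
  rw [Real.sinh_eq]; norm_num at *; linarith

lemma sinh_one_lb : 1.1752 ≤ Real.sinh 1 := by
  have h1 := Real.exp_one_gt_d9; have h2 := exp_neg_one_ub
  rw [Real.sinh_eq]; norm_num at *; linarith

lemma cosh_one_ub : Real.cosh 1 ≤ 1.54309 := by
  have h1 := Real.exp_one_lt_d9; have h2 := exp_neg_one_ub
  rw [Real.cosh_eq]; norm_num at *; linarith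

lemma cosh_one_lb : 1.54308 ≤ Real.cosh 1 := by
  have h1 := Real.exp_one_gt_d9; have h2 := exp_neg_one_lb
  rw [Real.cosh_eq]; norm_num at *; linarith

lemma core_ineq {a b : ℝ} (ha0 : 0 ≤ a) (ha1 : a ≤ 1) (hab : a^2 + b^2 = 1) :
    Real.sinh 1 ^ 2 ≤ Real.sinh a ^ 2
      + (Real.cosh 1 ^ 2 + Real.sinh 1 ^ 2) * Real.sin b ^ 2 := by
  have hb1 : b^2 ≤ 1 := by nlinarith
  have hsin : b^2 - b^4/2 ≤ Real.sin b ^ 2 := by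
    rcases lt_trichotomy b 0 with hb | hb | hb
    · have h1 : 0 < -b := by linarith
      have h2 : -b ≤ 1 := by nlinarith
      have h3 : (-b) - (-b)^3/4 < Real.sin (-b) := by
        have := Real.sin_gt_sub_cube h1; nlinarith [pow_pos h1 3]
      have h4 : 0 ≤ (-b) - (-b)^3/4 := by nlinarith
      have h5 : Real.sin (-b) = - Real.sin b := Real.sin_neg b
      nlinarith [sq_nonneg b, sq_nonneg (b*b)]
    · simp [hb]
    · have h2 : b ≤ 1 := by nlinarith
      have h3 : b - b^3/4 < Real.sin b := by
        have := Real.sin_gt_sub_cube hb; nlinarith [pow_pos hb 3]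
      have h4 : 0 ≤ b - b^3/4 := by nlinarith
      nlinarith [sq_nonneg b, sq_nonneg (b*b)]
  have hid : Real.sinh 1 ^ 2 - Real.sinh a ^ 2
      = Real.sinh (1+a) * Real.sinh (1-a) := by
    rw [Real.sinh_add, Real.sinh_sub]
    have c1 := Real.cosh_sq 1
    have ca := Real.cosh_sq a
    nlinarith [c1, ca]
  have hsa0 : 0 ≤ Real.sinh a := Real.sinh_nonneg_iff.2 ha0
  have hs1ma0 : 0 ≤ Real.sinh (1-a) := Real.sinh_nonneg_iff.2 (by linarith)
  have h2 : Real.sinh (1-a) ≤ 1.3592 * (1-a) := sinh_le_aux (by linarith) (by linarith)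
  have h5 : Real.sinh a ≤ 1.3592 * a := sinh_le_aux ha0 ha1
  have h5' : Real.sinh (a/2) ≤ 1.3592 * (a/2) := sinh_le_aux (by linarith) (by linarith)
  have h5'0 : 0 ≤ Real.sinh (a/2) := Real.sinh_nonneg_iff.2 (by linarith)
  have h4 : Real.cosh a ≤ 1 + 0.924 * a^2 := by
    have hd : Real.cosh (2*(a/2)) = Real.cosh (a/2)^2 + Real.sinh (a/2)^2 := by
      rw [Real.cosh_two_mul, Real.cosh_sq]
    rw [show 2*(a/2) = a by ring] at hd
    have hcs := Real.cosh_sq (a/2)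
    nlinarith
  have hca1 : 1 ≤ Real.cosh a := Real.one_le_cosh a
  have hup : Real.sinh (1+a) ≤ 1.17521 * (1 + 0.924*a^2) + 1.54309 * (1.3592 * a) := by
    rw [Real.sinh_add]
    have hs1u := sinh_one_ub
    have hc1u := cosh_one_ub
    have hs1l := sinh_one_lb
    have hc1l := cosh_one_lb
    have hs10 : 0 ≤ Real.sinh 1 := by linarith
    nlinarith [mul_nonneg hsa0 (sub_nonneg.2 hc1u),
      mul_nonneg (sub_nonneg.2 hs1u) (by linarith : (0:ℝ) ≤ Real.cosh a),
      mul_le_mul_of_nonneg_left h4 hs10,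
      mul_le_mul_of_nonneg_left h5 (by linarith : (0:ℝ) ≤ Real.cosh 1)]
  have hupnn : (0:ℝ) ≤ 1.17521 * (1 + 0.924*a^2) + 1.54309 * (1.3592 * a) := by positivity
  have hA : Real.sinh 1 ^ 2 - Real.sinh a ^ 2
      ≤ (1.17521 * (1 + 0.924*a^2) + 1.54309 * (1.3592 * a)) * (1.3592 * (1-a)) := by
    rw [hid]
    exact mul_le_mul hup h2 hs1ma0 hupnn
  have hpoly : (1.17521 * (1 + 0.924*a^2) + 1.54309 * (1.3592 * a)) * 1.3592
      ≤ 1.88105 * ((1+a)*(1+a^2)) := by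
    nlinarith [sq_nonneg (a - 7/20), mul_nonneg ha0 (sq_nonneg (a - 7/20))]
  have hC : (1.17521 * (1 + 0.924*a^2) + 1.54309 * (1.3592 * a)) * (1.3592 * (1-a))
      ≤ 3.7621 * (b^2 - b^4/2) := by
    have h1a : (0:ℝ) ≤ 1 - a := by linarith
    have := mul_le_mul_of_nonneg_right hpoly h1a
    have hb2 : b^2 = 1 - a^2 := by linarith
    have hb4 : b^4 = (1-a^2)^2 := by rw [show b^4 = (b^2)^2 by ring, hb2]
    have hiden : 1.88105 * ((1+a)*(1+a^2)) * (1-a) = 3.7621 * (b^2 - b^4/2) := by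
      rw [hb2, hb4]; ring
    nlinarith
  have hK : 3.7621 ≤ Real.cosh 1 ^ 2 + Real.sinh 1 ^ 2 := by
    nlinarith [sinh_one_lb, cosh_one_lb]
  have hB : 3.7621 * (b^2 - b^4/2) ≤ (Real.cosh 1 ^ 2 + Real.sinh 1 ^ 2) * Real.sin b ^ 2 := by
    have hnn : 0 ≤ b^2 - b^4/2 := by nlinarith [sq_nonneg b]
    nlinarith [sq_nonneg (Real.sin b)]
  linarith

theorem tanh_boundary_bound :
    ∀ θ ∈ Ioc (-π) π,
      Real.tanh 1 ≤ ‖Complex.tanh (Complex.exp ((θ / 2 : ℂ) * Complex.I))‖ := by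
  intro θ hθ
  obtain ⟨hθ1, hθ2⟩ := hθ
  have hpi := Real.pi_gt_three
  set a := Real.cos (θ/2) with ha_def
  set b := Real.sin (θ/2) with hb_def
  have ha0 : 0 ≤ a := Real.cos_nonneg_of_mem_Icc ⟨by linarith, by linarith⟩
  have ha1 : a ≤ 1 := Real.cos_le_one _
  have hab : a^2 + b^2 = 1 := by
    rw [ha_def, hb_def]; exact Real.cos_sq_add_sin_sq _
  have hb1 : b^2 ≤ 1 := by nlinarith
  have hz : Complex.exp ((θ / 2 : ℂ) * Complex.I) = (a:ℂ) + (b:ℂ) * Complex.I := by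
    rw [show ((θ:ℂ)/2) = ((θ/2 : ℝ) : ℂ) by push_cast; ring, Complex.exp_mul_I]
    simp [ha_def, hb_def]
  have hsinh : Complex.sinh ((a:ℂ) + (b:ℂ) * Complex.I)
      = ((Real.sinh a * Real.cos b : ℝ) : ℂ) + ((Real.cosh a * Real.sin b : ℝ) : ℂ) * Complex.I := by
    rw [Complex.sinh_add, Complex.sinh_mul_I, Complex.cosh_mul_I]
    push_cast
    ring
  have hcosh : Complex.cosh ((a:ℂ) + (b:ℂ) * Complex.I)
      = ((Real.cosh a * Real.cos b : ℝ) : ℂ) + ((Real.sinh a * Real.sin b : ℝ) : ℂ) * Complex.I := by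
    rw [Complex.cosh_add, Complex.sinh_mul_I, Complex.cosh_mul_I]
    push_cast
    ring
  have hnsq : ∀ x y : ℝ, ‖(x:ℂ) + (y:ℂ)*Complex.I‖^2 = x^2 + y^2 := by
    intro x y
    rw [Complex.sq_norm, Complex.normSq_add_mul_I]
  have hsincos := Real.sin_sq_add_cos_sq b
  have hcoshsq := Real.cosh_sq a
  have hc1sq := Real.cosh_sq 1
  have hNs : ‖Complex.sinh ((a:ℂ) + (b:ℂ) * Complex.I)‖^2
      = Real.sinh a ^ 2 + Real.sin b ^ 2 := by
    rw [hsinh, hnsq]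
    nlinarith
  have hNc : ‖Complex.cosh ((a:ℂ) + (b:ℂ) * Complex.I)‖^2
      = Real.sinh a ^ 2 + Real.cos b ^ 2 := by
    rw [hcosh, hnsq]
    nlinarith
  -- cos b > 0
  have hcb : 0 < Real.cos b := by
    apply Real.cos_pos_of_mem_Ioo
    constructor
    · have := Real.neg_one_le_sin (θ/2); rw [← hb_def] at this; linarith
    · have := Real.sin_le_one (θ/2); rw [← hb_def] at this; linarith
  have hden : 0 < ‖Complex.cosh ((a:ℂ) + (b:ℂ) * Complex.I)‖ := by
    have h2 : 0 < ‖Complex.cosh ((a:ℂ) + (b:ℂ) * Complex.I)‖^2 := by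
      rw [hNc]; positivity
    nlinarith [norm_nonneg (Complex.cosh ((a:ℂ) + (b:ℂ) * Complex.I))]
  rw [hz, Complex.tanh_eq_sinh_div_cosh, norm_div]
  rw [le_div_iff₀ hden]
  have ht1 : 0 ≤ Real.tanh 1 := by
    rw [Real.tanh_eq_sinh_div_cosh]
    positivity
  have hc1pos : 0 < Real.cosh 1 := Real.cosh_pos _
  -- squared inequality
  have hsq : (Real.tanh 1 * ‖Complex.cosh ((a:ℂ) + (b:ℂ) * Complex.I)‖)^2
      ≤ ‖Complex.sinh ((a:ℂ) + (b:ℂ) * Complex.I)‖^2 := by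
    have hcore := core_ineq ha0 ha1 hab
    rw [mul_pow, hNc, hNs, Real.tanh_eq_sinh_div_cosh, div_pow,
      div_mul_eq_mul_div, div_le_iff₀ (by positivity)]
    nlinarith [hcore, sq_nonneg (Real.sin b), sq_nonneg (Real.sinh a)]
  nlinarith [norm_nonneg (Complex.sinh ((a:ℂ) + (b:ℂ) * Complex.I)),
    mul_nonneg ht1 hden.le]
end

section
/- The function $\mathcal{Q}(z) = \frac{\sqrt{z}}{2}\tanh\sqrt{z}$ is starlike univalent on the unit disc; in particular, $\operatorname{Re}\left(\frac{z\mathcal{Q}'(z)}{\mathcal{Q}(z)}\right) = \frac{1}{2} + \operatorname{Re}\left(\sqrt{z}\,\operatorname{csch}(2\sqrt{z})\right) > \frac{1}{2} + \operatorname{csch} 2 > 0$ for all $z \in \mathbb{D} \setminus \{0\}$. -/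
/-!
Write `w = √z`. Since `F u = u / 2 * tanh u` is even, `Q z = F w` for either square root `w`
of `z`, so the chain rule through a local holomorphic branch of `√` gives
`z Q'(z) / Q(z) = w F'(w) / (2 F(w)) = 1/2 + w / sinh (2w)`.
For `|w| < 1` the sinh series gives `|ζ - 1| ≤ |w|² (sinh 2 / 2 - 1)` with `ζ = sinh (2w) / (2w)`,
and inversion maps the disc `|ζ - 1| < ρ ≤ 1` into `Re ζ⁻¹ > 1 / (1 + ρ)`; taking
`ρ = sinh 2 / 2 - 1` (which is `≤ 1` because `sinh 2 < 4`) yields `Re (w / sinh 2w) > 1 / sinh 2`.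
-/

open Metric

/-- `Q(z) = (√z / 2) · tanh √z`. -/
noncomputable def Qfun (z : ℂ) : ℂ := z ^ (1/2 : ℂ) / 2 * Complex.tanh (z ^ (1/2 : ℂ))

/-- `√z · csch(2√z)`, with value `1/2` at `0`. -/
noncomputable def sqrtCsch (z : ℂ) : ℂ :=
  if z = 0 then 1 / 2 else z ^ (1/2 : ℂ) / Complex.sinh (2 * z ^ (1/2 : ℂ))

theorem norm_sinh_mul_sub_mul_le {u : ℂ} (hu : ‖u‖ ≤ 1) {R : ℝ} (hR : 0 ≤ R) :
    ‖Complex.sinh (R * u) - R * u‖ ≤ ‖u‖ ^ 3 * (Real.sinh R - R) := by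
  have hC := (hasSum_nat_add_iff' 1).mpr (Complex.hasSum_sinh (R * u))
  have hS := ((hasSum_nat_add_iff' 1).mpr (Real.hasSum_sinh R)).mul_left (‖u‖ ^ 3)
  simp only [Finset.sum_range_one, mul_zero, zero_add, pow_one, Nat.factorial_one,
    Nat.cast_one, div_one] at hC hS
  refine hC.norm_le_of_bounded hS fun n => ?_
  have hpow : ‖u‖ ^ (2 * (n + 1) + 1) ≤ ‖u‖ ^ 3 :=
    pow_le_pow_of_le_one (norm_nonneg u) hu (by omega)
  rw [norm_div, norm_pow, norm_mul, Complex.norm_real, Real.norm_of_nonneg hR,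
    Complex.norm_natCast, mul_pow, mul_comm (R ^ _), mul_div_assoc]
  gcongr

theorem one_div_one_add_lt_re_inv {ζ : ℂ} {ρ : ℝ} (h : ‖ζ - 1‖ < ρ) (hρ : ρ ≤ 1) :
    1 / (1 + ρ) < (ζ⁻¹).re := by
  have hnorm : ζ.re ^ 2 + ζ.im ^ 2 < 2 * ζ.re + ρ ^ 2 - 1 := by
    have := Complex.sq_norm (ζ - 1)
    rw [Complex.normSq_apply, Complex.sub_re, Complex.sub_im, Complex.one_re,
      Complex.one_im] at this
    nlinarith [norm_nonneg (ζ - 1)]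
  have hre := (abs_lt.mp ((Complex.abs_re_le_norm (ζ - 1)).trans_lt h))
  rw [Complex.sub_re, Complex.one_re] at hre
  rw [Complex.inv_re, Complex.normSq_apply, div_lt_div_iff₀ (by linarith) (by nlinarith)]
  nlinarith

theorem sinh_two_lt_four : Real.sinh 2 < 4 := by
  have he : Real.exp 2 < 8 := by
    have := Real.exp_one_lt_d9
    rw [show (2:ℝ) = 1 + 1 by norm_num, Real.exp_add]
    nlinarith [Real.exp_pos 1]
  rw [Real.sinh_eq]
  linarith [Real.exp_pos (-2)]

theorem one_div_sinh_two_lt_re_div_sinh_two_mul {w : ℂ} (hw0 : w ≠ 0) (hw : ‖w‖ < 1) :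
    1 / Real.sinh 2 < (w / Complex.sinh (2 * w)).re := by
  set S := Real.sinh 2
  have hS2 : 2 < S := Real.self_lt_sinh_iff.mpr two_pos
  have hw0' : 0 < ‖w‖ := norm_pos_iff.mpr hw0
  have hζ : ‖Complex.sinh (2 * w) / (2 * w) - 1‖ < S / 2 - 1 := by
    have hsinh : ‖Complex.sinh (2 * w) - 2 * w‖ ≤ ‖w‖ ^ 3 * (S - 2) := by
      exact_mod_cast norm_sinh_mul_sub_mul_le hw.le zero_le_two
    rw [div_sub_one (by simpa using hw0), norm_div, norm_mul, Complex.norm_ofNat,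
      div_lt_iff₀ (by positivity)]
    have hw2 : ‖w‖ ^ 2 < 1 := pow_lt_one₀ hw0'.le hw two_ne_zero
    nlinarith [mul_pos (mul_pos hw0' (sub_pos.2 hS2)) (sub_pos.2 hw2)]
  have hinv := one_div_one_add_lt_re_inv hζ (by linarith [sinh_two_lt_four])
  have hre : w / Complex.sinh (2 * w) = (Complex.sinh (2 * w) / (2 * w))⁻¹ / 2 := by
    field_simp
  rw [hre, Complex.div_ofNat_re]
  calc 1 / S = 1 / (1 + (S / 2 - 1)) / 2 := by field_simp [(two_pos.trans hS2).ne']; ring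
    _ < _ := by gcongr

theorem Complex.cpow_one_div_two_sq (z : ℂ) : (z ^ (1 / 2 : ℂ)) ^ 2 = z := by
  rw [one_div]
  exact_mod_cast Complex.cpow_nat_inv_pow z two_ne_zero

theorem Complex.hasDerivAt_tanh {x : ℂ} (hx : Complex.cosh x ≠ 0) :
    HasDerivAt Complex.tanh (1 / Complex.cosh x ^ 2) x := by
  have h := (Complex.hasDerivAt_sinh x).div (Complex.hasDerivAt_cosh x) hx
  rw [show Complex.sinh / Complex.cosh = Complex.tanh from
    funext fun y => (Complex.tanh_eq_sinh_div_cosh y).symm] at h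
  refine h.congr_deriv ?_
  rw [← Complex.cosh_sq_sub_sinh_sq x]
  ring

theorem hasDerivAt_of_sq_eq_self {𝕜 : Type*} [NontriviallyNormedField 𝕜] {s : 𝕜 → 𝕜} {z : 𝕜}
    (hs : ∀ x, s x ^ 2 = x) (hd : DifferentiableAt 𝕜 s z) : HasDerivAt s (2 * s z)⁻¹ z := by
  have hsq := hd.hasDerivAt.pow 2
  rw [show s ^ 2 = id from funext hs] at hsq
  have h1 : 2 * s z * deriv s z = 1 := by simpa using hsq.unique (hasDerivAt_id z)
  exact eq_inv_of_mul_eq_one_right h1 ▸ hd.hasDerivAt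

theorem exists_sqrt_differentiableAt {w : ℂ} (hw : w ≠ 0) :
    ∃ s : ℂ → ℂ, (∀ x, s x ^ 2 = x) ∧ s (w ^ 2) = w ∧ DifferentiableAt ℂ s (w ^ 2) := by
  obtain ⟨s, hs, hd⟩ : ∃ s : ℂ → ℂ, (∀ x, s x ^ 2 = x) ∧ DifferentiableAt ℂ s (w ^ 2) := by
    rcases Complex.mem_slitPlane_or_neg_mem_slitPlane (pow_ne_zero 2 hw) with h | h
    · exact ⟨(· ^ (1 / 2 : ℂ)), Complex.cpow_one_div_two_sq, differentiableAt_id.cpow_const h⟩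
    · refine ⟨fun x => Complex.I * (-x) ^ (1 / 2 : ℂ), fun x => ?_, ?_⟩
      · rw [mul_pow, Complex.cpow_one_div_two_sq, Complex.I_sq]; ring
      · exact (differentiableAt_id.neg.cpow_const h).const_mul _
  rcases sq_eq_sq_iff_eq_or_eq_neg.1 (hs (w ^ 2)) with h | h
  · exact ⟨s, hs, h, hd⟩
  · exact ⟨-s, fun x => by simp [hs], by simp [h], hd.neg⟩

theorem Qfun_eq_of_sq_eq {z u : ℂ} (hu : u ^ 2 = z) : Qfun z = u / 2 * Complex.tanh u := by
  rcases sq_eq_sq_iff_eq_or_eq_neg.1 ((Complex.cpow_one_div_two_sq z).trans hu.symm) with h | h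
  · rw [Qfun, h]
  · rw [Qfun, h, Complex.tanh_neg]
    ring

theorem hasDerivAt_Qfun {w : ℂ} (hw : w ≠ 0) (hc : Complex.cosh w ≠ 0) :
    HasDerivAt Qfun ((Complex.tanh w + w / Complex.cosh w ^ 2) / 2 * (2 * w)⁻¹) (w ^ 2) := by
  obtain ⟨s, hs, hsw, hd⟩ := exists_sqrt_differentiableAt hw
  have hF : HasDerivAt (fun u => u / 2 * Complex.tanh u)
      ((Complex.tanh w + w / Complex.cosh w ^ 2) / 2) w := by
    refine (((hasDerivAt_id' w).div_const 2).mul (Complex.hasDerivAt_tanh hc)).congr_deriv ?_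
    ring
  have hQ : Qfun = (fun u => u / 2 * Complex.tanh u) ∘ s :=
    funext fun x => Qfun_eq_of_sq_eq (hs x)
  have hs' := hasDerivAt_of_sq_eq_self hs hd
  rw [hsw] at hs'
  rw [hQ]
  exact hF.comp_of_eq (w ^ 2) hs' hsw.symm

theorem Qfun_starlike :
    ∀ z ∈ ball (0:ℂ) 1 \ {0},
      (z * deriv Qfun z / Qfun z).re = 1 / 2 + (sqrtCsch z).re ∧
      1 / 2 + 1 / Real.sinh 2 < 1 / 2 + (sqrtCsch z).re ∧
      0 < 1 / 2 + 1 / Real.sinh 2 := by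
  rintro z ⟨hz1, hz0 : z ≠ 0⟩
  obtain ⟨w, hw⟩ : ∃ w, z ^ (1 / 2 : ℂ) = w := ⟨_, rfl⟩
  have hwz : w ^ 2 = z := hw ▸ Complex.cpow_one_div_two_sq z
  have hw0 : w ≠ 0 := by rintro rfl; exact hz0 (by simp [← hwz])
  have hw1 : ‖w‖ < 1 := by
    rw [← pow_lt_one_iff_of_nonneg (norm_nonneg w) two_ne_zero, ← norm_pow, hwz]
    simpa using hz1
  have hsinh2 : 0 < Real.sinh 2 := Real.sinh_pos_iff.mpr two_pos
  have hcsch : sqrtCsch z = w / Complex.sinh (2 * w) := by rw [sqrtCsch, if_neg hz0, hw]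
  have hcsch_re : 1 / Real.sinh 2 < (sqrtCsch z).re :=
    hcsch ▸ one_div_sinh_two_lt_re_div_sinh_two_mul hw0 hw1
  have hsinh : Complex.sinh (2 * w) ≠ 0 := by
    intro h
    rw [hcsch, h, div_zero, Complex.zero_re] at hcsch_re
    linarith [one_div_pos.mpr hsinh2]
  rw [Complex.sinh_two_mul] at hsinh
  have hcosh : Complex.cosh w ≠ 0 := right_ne_zero_of_mul hsinh
  have hsinhw : Complex.sinh w ≠ 0 := right_ne_zero_of_mul (left_ne_zero_of_mul hsinh)
  have hlog : z * deriv Qfun z / Qfun z = 1 / 2 + sqrtCsch z := by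
    rw [hcsch, ← hwz, (hasDerivAt_Qfun hw0 hcosh).deriv,
      Qfun_eq_of_sq_eq rfl, Complex.tanh_eq_sinh_div_cosh, Complex.sinh_two_mul]
    field_simp
  refine ⟨by rw [hlog]; simp, by linarith, by positivity⟩
end

section
/- Let $p$ be analytic in the unit disc $\mathbb{D}$ with $p(0)=1$ and suppose that for all $z \in \mathbb{D}$, $|z p'(z)| < \frac{\sin 1}{2}$. Then $p(z) \prec \cosh\sqrt{z}$, i.e., there is an analytic $w : \mathbb{D} \to \mathbb{D}$ with $w(0)=0$ and $p(z) = \cosh\sqrt{w(z)}$ for all $z \in \mathbb{D}$. -/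
open Metric
open scoped NNReal Topology

/-- `cosh √z` as a power series. -/
noncomputable def coshSqrt (z : ℂ) : ℂ := ∑' n : ℕ, z ^ n / (Nat.factorial (2 * n) : ℂ)

lemma summable_coshSqrt (z : ℂ) : Summable (fun n : ℕ => z ^ n / (Nat.factorial (2 * n) : ℂ)) := by
  apply Summable.of_norm_bounded (g := fun n : ℕ => ‖z‖ ^ n / (Nat.factorial n : ℝ))
    (Real.summable_pow_div_factorial ‖z‖)
  intro n
  rw [norm_div, norm_pow, Complex.norm_natCast]
  gcongr
  omega

lemma fact_ineq (n : ℕ) : ((2 * (n + 2)).factorial : ℝ)⁻¹ * ((n:ℝ) + 2) ≤ (1/12) * (1/20) ^ n := by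
  induction n with
  | zero => norm_num [Nat.factorial]
  | succ n ih =>
    push_cast
    have hB : (0:ℝ) < ((2 * (n + 2)).factorial : ℝ) := by positivity
    have h2 : ((2 * (n + 1 + 2)).factorial : ℝ)
        = (2*(n:ℝ) + 6) * (2*(n:ℝ) + 5) * ((2 * (n + 2)).factorial : ℝ) := by
      have h1 : 2 * (n + 1 + 2) = (2 * (n + 2)) + 1 + 1 := by ring
      rw [h1, Nat.factorial_succ, Nat.factorial_succ]
      push_cast; ring
    have hC : (0:ℝ) < (2*(n:ℝ)+6)*(2*(n:ℝ)+5) := by positivity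
    have hkey : ((2*(n:ℝ)+6)*(2*(n:ℝ)+5))⁻¹ * ((n:ℝ)+1+2) ≤ (1/20) * ((n:ℝ)+2) := by
      rw [inv_mul_le_iff₀ hC]
      nlinarith [Nat.cast_nonneg (α := ℝ) n]
    have key : ((2 * (n+1+2)).factorial : ℝ)⁻¹ * ((n:ℝ) + 1 + 2)
        ≤ (1/20) * (((2 * (n + 2)).factorial : ℝ)⁻¹ * ((n:ℝ) + 2)) := by
      rw [h2, mul_inv]
      calc ((2*(n:ℝ)+6)*(2*(n:ℝ)+5))⁻¹ * (((2 * (n + 2)).factorial : ℝ))⁻¹ * ((n:ℝ) + 1 + 2)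
          = (((2 * (n + 2)).factorial : ℝ))⁻¹ * (((2*(n:ℝ)+6)*(2*(n:ℝ)+5))⁻¹ * ((n:ℝ)+1+2)) := by
            ring
        _ ≤ (((2 * (n + 2)).factorial : ℝ))⁻¹ * ((1/20) * ((n:ℝ)+2)) := by
            apply mul_le_mul_of_nonneg_left hkey (by positivity)
        _ = (1/20) * ((((2 * (n + 2)).factorial : ℝ))⁻¹ * ((n:ℝ)+2)) := by ring
    calc ((2 * (n + 1 + 2)).factorial : ℝ)⁻¹ * ((n:ℝ) + 1 + 2)
        ≤ (1/20) * (((2 * (n + 2)).factorial : ℝ)⁻¹ * ((n:ℝ) + 2)) := key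
      _ ≤ (1/20) * ((1/12) * (1/20) ^ n) := by
          apply mul_le_mul_of_nonneg_left ih (by norm_num)
      _ = (1/12) * (1/20) ^ (n + 1) := by ring

lemma fact_ineq2 (n : ℕ) : ((2 * (n + 2)).factorial : ℝ)⁻¹ ≤ (1/24) * (1/20) ^ n := by
  have h := fact_ineq n
  have h2 : ((2 * (n + 2)).factorial : ℝ)⁻¹ * 2 ≤ ((2 * (n + 2)).factorial : ℝ)⁻¹ * ((n:ℝ) + 2) := by
    apply mul_le_mul_of_nonneg_left (by nlinarith [Nat.cast_nonneg (α := ℝ) n]) (by positivity)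
  nlinarith

section
variable {a b : ℂ}

lemma pow_sub_pow_norm_le (ha : ‖a‖ ≤ 1) (hb : ‖b‖ ≤ 1) (n : ℕ) :
    ‖a ^ n - b ^ n‖ ≤ n * ‖a - b‖ := by
  induction n with
  | zero => simp
  | succ n ih =>
    have h : a ^ (n+1) - b ^ (n+1) = a ^ n * (a - b) + (a ^ n - b ^ n) * b := by ring
    rw [h]
    calc ‖a ^ n * (a - b) + (a ^ n - b ^ n) * b‖
        ≤ ‖a ^ n * (a - b)‖ + ‖(a ^ n - b ^ n) * b‖ := norm_add_le _ _
      _ ≤ 1 * ‖a - b‖ + ((n : ℝ) * ‖a - b‖) * 1 := by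
          rw [norm_mul, norm_mul]
          have h1 : ‖a ^ n‖ ≤ 1 := by rw [norm_pow]; exact pow_le_one₀ (norm_nonneg a) ha
          have h2 : ‖a ^ n - b ^ n‖ * ‖b‖ ≤ ((n : ℝ) * ‖a - b‖) * 1 := by
            apply mul_le_mul ih hb (norm_nonneg b) (by positivity)
          exact add_le_add (mul_le_mul_of_nonneg_right h1 (norm_nonneg _)) h2
      _ = ((n : ℕ) + 1 : ℝ) * ‖a - b‖ := by ring
      _ = (((n + 1 : ℕ)) : ℝ) * ‖a - b‖ := by push_cast; ring
end

set_option maxHeartbeats 1000000 in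
lemma coshSqrt_diff_bound {a b : ℂ} (ha : ‖a‖ ≤ 1) (hb : ‖b‖ ≤ 1) :
    ‖coshSqrt a - coshSqrt b - (a - b)/2‖ ≤ (1/10) * ‖a - b‖ := by
  set u : ℕ → ℂ := fun n => (a ^ n - b ^ n) / ((2 * n).factorial : ℂ) with hu_def
  have hs : HasSum u (coshSqrt a - coshSqrt b) := by
    have h := ((summable_coshSqrt a).hasSum.sub (summable_coshSqrt b).hasSum)
    have he : (fun n : ℕ => a ^ n / ((2*n).factorial : ℂ) - b ^ n / ((2*n).factorial : ℂ)) = u := by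
      funext n; rw [hu_def]; ring
    rw [coshSqrt, coshSqrt]
    exact he ▸ h
  have hu : Summable u := hs.summable
  have hu1 : Summable (fun n => u (n + 1)) := (summable_nat_add_iff 1).2 hu
  have hu2 : Summable (fun n => u (n + 1 + 1)) := (summable_nat_add_iff 1).2 hu1
  have hsplit : coshSqrt a - coshSqrt b = u 0 + (u 1 + ∑' n, u (n + 1 + 1)) := by
    rw [← hs.tsum_eq, hu.tsum_eq_zero_add, hu1.tsum_eq_zero_add]
  have hu0 : u 0 = 0 := by simp [hu_def]
  have hu1v : u 1 = (a - b) / 2 := by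
    rw [hu_def]; norm_num [Nat.factorial]
  have hrem : coshSqrt a - coshSqrt b - (a - b)/2 = ∑' n, u (n + 1 + 1) := by
    rw [hsplit, hu0, hu1v]; ring
  rw [hrem]
  have hbound : ∀ n : ℕ, ‖u (n + 1 + 1)‖ ≤ (1/12) * (1/20) ^ n * ‖a - b‖ := by
    intro n
    have h1 : u (n + 1 + 1) = (a ^ (n+2) - b ^ (n+2)) / ((2 * (n+2)).factorial : ℂ) := by
      rw [hu_def]
    rw [h1, norm_div, Complex.norm_natCast]
    rw [div_eq_inv_mul]
    calc ((2 * (n+2)).factorial : ℝ)⁻¹ * ‖a ^ (n+2) - b ^ (n+2)‖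
        ≤ ((2 * (n+2)).factorial : ℝ)⁻¹ * (((n:ℝ)+2) * ‖a - b‖) := by
          apply mul_le_mul_of_nonneg_left _ (by positivity)
          have := pow_sub_pow_norm_le ha hb (n+2)
          push_cast at this ⊢
          linarith
      _ = (((2 * (n+2)).factorial : ℝ)⁻¹ * ((n:ℝ)+2)) * ‖a - b‖ := by ring
      _ ≤ ((1/12) * (1/20) ^ n) * ‖a - b‖ :=
          mul_le_mul_of_nonneg_right (fact_ineq n) (norm_nonneg _)
  have hgeom : HasSum (fun n : ℕ => (1/12) * (1/20) ^ n * ‖a - b‖) ((1/12) * (1-(1/20:ℝ))⁻¹ * ‖a - b‖) := by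
    have h := hasSum_geometric_of_lt_one (by norm_num : (0:ℝ) ≤ 1/20) (by norm_num)
    have h2 := (h.mul_left (1/12)).mul_right ‖a - b‖
    convert h2 using 2 <;> ring
  calc ‖∑' n, u (n + 1 + 1)‖ ≤ (1/12) * (1-(1/20:ℝ))⁻¹ * ‖a - b‖ :=
        tsum_of_norm_bounded hgeom hbound
    _ ≤ (1/10) * ‖a - b‖ := by
        apply mul_le_mul_of_nonneg_right _ (norm_nonneg _)
        norm_num

set_option maxHeartbeats 1000000 in
lemma coshSqrt_quad_bound {a : ℂ} (ha : ‖a‖ ≤ 1) :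
    ‖coshSqrt a - 1 - a/2‖ ≤ (1/20) * ‖a‖^2 := by
  set u : ℕ → ℂ := fun n => a ^ n / ((2 * n).factorial : ℂ) with hu_def
  have hs : HasSum u (coshSqrt a) := (summable_coshSqrt a).hasSum
  have hu : Summable u := hs.summable
  have hu1 : Summable (fun n => u (n + 1)) := (summable_nat_add_iff 1).2 hu
  have hu2 : Summable (fun n => u (n + 1 + 1)) := (summable_nat_add_iff 1).2 hu1
  have hsplit : coshSqrt a = u 0 + (u 1 + ∑' n, u (n + 1 + 1)) := by
    rw [← hs.tsum_eq, hu.tsum_eq_zero_add, hu1.tsum_eq_zero_add]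
  have hu0 : u 0 = 1 := by simp [hu_def]
  have hu1v : u 1 = a / 2 := by rw [hu_def]; norm_num [Nat.factorial]
  have hrem : coshSqrt a - 1 - a/2 = ∑' n, u (n + 1 + 1) := by
    rw [hsplit, hu0, hu1v]; ring
  rw [hrem]
  have hbound : ∀ n : ℕ, ‖u (n + 1 + 1)‖ ≤ (1/24) * (1/20) ^ n * ‖a‖^2 := by
    intro n
    have h1 : u (n + 1 + 1) = a ^ (n+2) / ((2 * (n+2)).factorial : ℂ) := by rw [hu_def]
    rw [h1, norm_div, Complex.norm_natCast, norm_pow, div_eq_inv_mul]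
    calc ((2 * (n+2)).factorial : ℝ)⁻¹ * ‖a‖ ^ (n+2)
        ≤ ((2 * (n+2)).factorial : ℝ)⁻¹ * ‖a‖ ^ 2 := by
          apply mul_le_mul_of_nonneg_left _ (by positivity)
          exact pow_le_pow_of_le_one (norm_nonneg a) ha (by omega)
      _ ≤ ((1/24) * (1/20) ^ n) * ‖a‖ ^ 2 :=
          mul_le_mul_of_nonneg_right (fact_ineq2 n) (by positivity)
  have hgeom : HasSum (fun n : ℕ => (1/24) * (1/20) ^ n * ‖a‖^2) ((1/24) * (1-(1/20:ℝ))⁻¹ * ‖a‖^2) := by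
    have h := hasSum_geometric_of_lt_one (by norm_num : (0:ℝ) ≤ 1/20) (by norm_num)
    have h2 := (h.mul_left (1/24)).mul_right (‖a‖^2)
    convert h2 using 2 <;> ring
  calc ‖∑' n, u (n + 1 + 1)‖ ≤ (1/24) * (1-(1/20:ℝ))⁻¹ * ‖a‖^2 :=
        tsum_of_norm_bounded hgeom hbound
    _ ≤ (1/20) * ‖a‖^2 := by
        apply mul_le_mul_of_nonneg_right _ (by positivity)
        norm_num

lemma coshSqrt_lower {a b : ℂ} (ha : ‖a‖ ≤ 1) (hb : ‖b‖ ≤ 1) :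
    (2/5) * ‖a - b‖ ≤ ‖coshSqrt a - coshSqrt b‖ := by
  have h := coshSqrt_diff_bound ha hb
  have h2 : ‖(a-b)/2‖ - ‖coshSqrt a - coshSqrt b‖ ≤ (1/10) * ‖a - b‖ := by
    calc ‖(a-b)/2‖ - ‖coshSqrt a - coshSqrt b‖
        ≤ ‖(a-b)/2 - (coshSqrt a - coshSqrt b)‖ := norm_sub_norm_le _ _
      _ = ‖coshSqrt a - coshSqrt b - (a - b)/2‖ := by rw [← norm_neg]; ring_nf
      _ ≤ (1/10) * ‖a - b‖ := h
  have h3 : ‖(a-b)/2‖ = ‖a - b‖/2 := by rw [norm_div, Complex.norm_ofNat]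
  linarith

noncomputable def coshSqrtSeries : FormalMultilinearSeries ℂ ℂ ℂ :=
  fun n => (((2*n).factorial : ℂ)⁻¹) • ContinuousMultilinearMap.mkPiAlgebraFin ℂ n ℂ

lemma coshSqrtSeries_apply (n : ℕ) (y : ℂ) :
    (coshSqrtSeries n fun _ => y) = y ^ n / ((2*n).factorial : ℂ) := by
  simp [coshSqrtSeries, List.ofFn_const, div_eq_inv_mul]

lemma coshSqrt_hasFPowerSeriesOnBall : HasFPowerSeriesOnBall coshSqrt coshSqrtSeries 0 1 := by
  constructor
  · apply FormalMultilinearSeries.le_radius_of_bound _ 1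
    intro n
    have h : ‖coshSqrtSeries n‖ ≤ ‖(((2*n).factorial : ℂ)⁻¹)‖ := by
      have h0 := norm_smul_le (((2*n).factorial : ℂ)⁻¹)
        (ContinuousMultilinearMap.mkPiAlgebraFin ℂ n ℂ)
      rw [ContinuousMultilinearMap.norm_mkPiAlgebraFin, mul_one] at h0
      exact h0
    have h2 : (1:ℝ) ≤ ((2*n).factorial : ℝ) := by exact_mod_cast (2*n).factorial_pos
    have h3 : ((1:ℝ≥0):ℝ) ^ n = 1 := by norm_num
    rw [h3, mul_one]
    refine le_trans h ?_
    rw [norm_inv, Complex.norm_natCast]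
    exact inv_le_one_of_one_le₀ h2
  · exact one_pos
  · intro y hy
    rw [zero_add]
    exact (funext (fun n => (coshSqrtSeries_apply n y).symm) :
      (fun n : ℕ => y ^ n / ((2*n).factorial : ℂ)) = _) ▸ (summable_coshSqrt y).hasSum

lemma coshSqrt_analyticAt {z : ℂ} (hz : ‖z‖ < 1) : AnalyticAt ℂ coshSqrt z := by
  apply coshSqrt_hasFPowerSeriesOnBall.analyticAt_of_mem
  rw [mem_emetric_ball_zero_iff, ← ofReal_norm]
  exact ENNReal.ofReal_lt_one.2 hz

lemma sin_one_bound : Real.sin 1 ≤ 0.87 := by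
  have hc : (1/2:ℝ) ≤ Real.cos 1 := by
    have := Real.one_sub_sq_div_two_le_cos (x := 1)
    norm_num at this ⊢
    linarith
  have hs := Real.sin_sq_add_cos_sq 1
  have hs1 : 0 ≤ Real.sin 1 :=
    Real.sin_nonneg_of_nonneg_of_le_pi (by norm_num) (by linarith [Real.pi_gt_three])
  nlinarith

lemma exists_coshSqrt_preimage (ζ : ℂ) (hζ : ‖ζ - 1‖ ≤ 0.435) :
    ∃ x : ℂ, ‖x‖ ≤ 97/100 ∧ coshSqrt x = ζ := by
  haveI hne : Nonempty (closedBall (0:ℂ) (97/100)) :=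
    ⟨⟨0, mem_closedBall_self (by norm_num)⟩⟩
  haveI : CompleteSpace (closedBall (0:ℂ) (97/100)) :=
    (Metric.isClosed_closedBall (x := (0:ℂ)) (ε := 97/100)).completeSpace_coe
  have hmem : ∀ x : ℂ, ‖x‖ ≤ 97/100 → ‖2*ζ - 2*coshSqrt x + x‖ ≤ 97/100 := by
    intro x hx
    have h1 : 2*ζ - 2*coshSqrt x + x = 2*(ζ - 1) - 2*(coshSqrt x - 1 - x/2) := by ring
    rw [h1]
    have h2 := coshSqrt_quad_bound (a := x) (le_trans hx (by norm_num))
    calc ‖2*(ζ-1) - 2*(coshSqrt x - 1 - x/2)‖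
        ≤ ‖2*(ζ-1)‖ + ‖2*(coshSqrt x - 1 - x/2)‖ := norm_sub_le _ _
      _ = 2*‖ζ-1‖ + 2*‖coshSqrt x - 1 - x/2‖ := by
          rw [norm_mul, norm_mul]; norm_num
      _ ≤ 2*0.435 + 2*((1/20)*‖x‖^2) := by
          have := norm_nonneg (coshSqrt x - 1 - x/2)
          gcongr
      _ ≤ 97/100 := by nlinarith [norm_nonneg x]
  let T : closedBall (0:ℂ) (97/100) → closedBall (0:ℂ) (97/100) := fun x =>
    ⟨2*ζ - 2*coshSqrt x + x, mem_closedBall_zero_iff.2 (hmem x (mem_closedBall_zero_iff.1 x.2))⟩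
  have hT : ContractingWith (1/5 : ℝ≥0) T := by
    constructor
    · have h5 : ((1/5:ℝ≥0):ℝ) < ((1:ℝ≥0):ℝ) := by norm_num
      exact_mod_cast h5
    · apply LipschitzWith.of_dist_le_mul
      intro x y
      have hx1 : ‖(x:ℂ)‖ ≤ 1 := le_trans (mem_closedBall_zero_iff.1 x.2) (by norm_num)
      have hy1 : ‖(y:ℂ)‖ ≤ 1 := le_trans (mem_closedBall_zero_iff.1 y.2) (by norm_num)
      have hd := coshSqrt_diff_bound hx1 hy1
      rw [Subtype.dist_eq (T x) (T y), Subtype.dist_eq x y, dist_eq_norm, dist_eq_norm]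
      show ‖(2*ζ - 2*coshSqrt (x:ℂ) + (x:ℂ)) - (2*ζ - 2*coshSqrt (y:ℂ) + (y:ℂ))‖
        ≤ ((1/5:ℝ≥0):ℝ) * ‖(x:ℂ) - (y:ℂ)‖
      have h3 : (2*ζ - 2*coshSqrt (x:ℂ) + (x:ℂ)) - (2*ζ - 2*coshSqrt (y:ℂ) + (y:ℂ))
          = (-2) * (coshSqrt (x:ℂ) - coshSqrt (y:ℂ) - ((x:ℂ) - (y:ℂ))/2) := by ring
      rw [h3, norm_mul]
      have hcoe : ((1/5 : ℝ≥0) : ℝ) = 1/5 := by norm_num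
      rw [hcoe]
      have : ‖(-2 : ℂ)‖ = 2 := by norm_num
      rw [this]
      linarith
  obtain ⟨x, hxmem⟩ := Exists.intro (ContractingWith.fixedPoint T hT) rfl
  have hfix : T (ContractingWith.fixedPoint T hT) = ContractingWith.fixedPoint T hT :=
    hT.fixedPoint_isFixedPt
  set xx := ContractingWith.fixedPoint T hT
  have hval : 2*ζ - 2*coshSqrt (xx:ℂ) + (xx:ℂ) = (xx:ℂ) := congrArg Subtype.val hfix
  refine ⟨(xx:ℂ), mem_closedBall_zero_iff.1 xx.2, ?_⟩
  linear_combination (-1/2 : ℂ) * hval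

lemma coshSqrt_zero : coshSqrt 0 = 1 := by
  rw [coshSqrt, tsum_eq_single 0 (fun n hn => by simp [zero_pow hn])]
  norm_num

lemma p_close_to_one (p : ℂ → ℂ) (hp : AnalyticOnNhd ℂ p (ball (0:ℂ) 1)) (hp0 : p 0 = 1)
    (hb : ∀ z ∈ ball (0:ℂ) 1, ‖z * deriv p z‖ < Real.sin 1 / 2) :
    ∀ z ∈ ball (0:ℂ) 1, ‖p z - 1‖ ≤ (Real.sin 1 / 2) * ‖z‖ := by
  set s := Real.sin 1 / 2 with hs_def
  have hspos : 0 < s := by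
    have := Real.sin_pos_of_pos_of_lt_pi (x := 1) (by norm_num)
      (by linarith [Real.pi_gt_three])
    positivity
  set h : ℂ → ℂ := fun ζ => ζ * deriv p ζ with hh_def
  have hh_an : AnalyticOnNhd ℂ h (ball (0:ℂ) 1) := analyticOnNhd_id.mul hp.deriv
  have hh_diff : DifferentiableOn ℂ h (ball (0:ℂ) 1) := hh_an.differentiableOn
  have hh0 : h 0 = 0 := by simp [hh_def]
  have hmaps : Set.MapsTo h (ball (0:ℂ) 1) (ball (h 0) s) := by
    intro z hz
    rw [hh0, mem_ball_zero_iff]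
    exact hb z hz
  have hschwarz : ∀ z ∈ ball (0:ℂ) 1, ‖h z‖ ≤ s * ‖z‖ := by
    intro z hz
    have := Complex.dist_le_div_mul_dist_of_mapsTo_ball hh_diff (hmaps.mono_right ball_subset_closedBall) hz
    rw [hh0] at this
    simpa [dist_eq_norm, div_one] using this
  have hd0 : ‖deriv p 0‖ ≤ s := by
    have h1 := Complex.norm_deriv_le_div_of_mapsTo_ball hh_diff (hmaps.mono_right ball_subset_closedBall) one_pos
    have h01 : (0:ℂ) ∈ ball (0:ℂ) 1 := mem_ball_self one_pos
    have h2 : HasDerivAt h (1 * deriv p 0 + 0 * deriv (deriv p) 0) 0 :=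
      (hasDerivAt_id (0:ℂ)).mul ((hp.deriv 0 h01).differentiableAt.hasDerivAt)
    have h3 : deriv h 0 = deriv p 0 := by
      rw [h2.deriv]; ring
    rw [h3, div_one] at h1
    exact h1
  intro z hz
  have hz1 : ‖z‖ < 1 := mem_ball_zero_iff.1 hz
  have key : ∀ t ∈ Set.Icc (0:ℝ) 1,
      HasDerivWithinAt (fun t : ℝ => p ((t:ℂ) * z)) (deriv p ((t:ℂ)*z) * z) (Set.Icc 0 1) t := by
    intro t ht
    have htz : (t:ℂ) * z ∈ ball (0:ℂ) 1 := by
      rw [mem_ball_zero_iff, norm_mul, Complex.norm_real, Real.norm_of_nonneg ht.1]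
      calc t * ‖z‖ ≤ 1 * ‖z‖ := mul_le_mul_of_nonneg_right ht.2 (norm_nonneg z)
        _ < 1 := by rw [one_mul]; exact hz1
    have hpd : HasDerivAt p (deriv p ((t:ℂ)*z)) ((t:ℂ)*z) :=
      (hp _ htz).differentiableAt.hasDerivAt
    have hlin : HasDerivAt (fun u : ℂ => u * z) z (t:ℂ) := by
      simpa using (hasDerivAt_id ((t:ℂ))).mul_const z
    have h1 : HasDerivAt (fun u : ℂ => p (u * z)) (deriv p ((t:ℂ)*z) * z) (t:ℂ) := by
      have := hpd.comp (t:ℂ) hlin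
      exact this
    exact (h1.comp_ofReal).hasDerivWithinAt
  have bound : ∀ t ∈ Set.Icc (0:ℝ) 1, ‖deriv p ((t:ℂ)*z) * z‖ ≤ s * ‖z‖ := by
    rintro t ⟨ht0, ht1⟩
    rcases eq_or_lt_of_le ht0 with rfl | htpos
    · simp only [Complex.ofReal_zero, zero_mul, norm_mul]
      exact mul_le_mul_of_nonneg_right hd0 (norm_nonneg z)
    · have htz : (t:ℂ) * z ∈ ball (0:ℂ) 1 := by
        rw [mem_ball_zero_iff, norm_mul, Complex.norm_real, Real.norm_of_nonneg ht0]
        calc t * ‖z‖ ≤ 1 * ‖z‖ := mul_le_mul_of_nonneg_right ht1 (norm_nonneg z)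
          _ < 1 := by rw [one_mul]; exact hz1
      have hs2 := hschwarz ((t:ℂ)*z) htz
      have he : ‖h ((t:ℂ)*z)‖ = t * (‖deriv p ((t:ℂ)*z)‖ * ‖z‖) := by
        rw [hh_def]
        simp only [norm_mul, Complex.norm_real, Real.norm_of_nonneg ht0]
        ring
      have he2 : s * ‖(t:ℂ)*z‖ = t * (s * ‖z‖) := by
        rw [norm_mul, Complex.norm_real, Real.norm_of_nonneg ht0]; ring
      rw [he, he2] at hs2
      have h4 : ‖deriv p ((t:ℂ)*z)‖ * ‖z‖ ≤ s * ‖z‖ := le_of_mul_le_mul_left hs2 htpos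
      rw [norm_mul]
      exact h4
  have hmean := Convex.norm_image_sub_le_of_norm_hasDerivWithin_le key bound (convex_Icc 0 1)
    (Set.mem_Icc.2 ⟨le_refl 0, zero_le_one⟩) (Set.mem_Icc.2 ⟨zero_le_one, le_refl 1⟩)
  have hg1 : p (((1:ℝ):ℂ) * z) = p z := by norm_num
  have hg0 : p (((0:ℝ):ℂ) * z) = 1 := by rw [Complex.ofReal_zero, zero_mul, hp0]
  rw [hg1, hg0] at hmean
  simpa using hmean

/-- `f ≺ g` : subordination on the unit disc. -/
def Subordinate (f g : ℂ → ℂ) : Prop :=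
  ∃ w : ℂ → ℂ, AnalyticOn ℂ w (ball (0:ℂ) 1) ∧ w 0 = 0 ∧
    Set.MapsTo w (ball (0:ℂ) 1) (ball (0:ℂ) 1) ∧
    ∀ z ∈ ball (0:ℂ) 1, f z = g (w z)

theorem subordination_of_deriv_bound (p : ℂ → ℂ)
    (hp : AnalyticOn ℂ p (ball (0:ℂ) 1)) (hp0 : p 0 = 1)
    (hb : ∀ z ∈ ball (0:ℂ) 1, ‖z * deriv p z‖ < Real.sin 1 / 2) :
    Subordinate p coshSqrt := by
  classical
  have hpN : AnalyticOnNhd ℂ p (ball (0:ℂ) 1) :=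
    (isOpen_ball.analyticOn_iff_analyticOnNhd).1 hp
  have h01 : (0:ℂ) ∈ ball (0:ℂ) 1 := mem_ball_self one_pos
  have hsin_nonneg : 0 ≤ Real.sin 1 :=
    (Real.sin_pos_of_pos_of_lt_pi (by norm_num) (by linarith [Real.pi_gt_three])).le
  have hclose : ∀ z ∈ ball (0:ℂ) 1, ‖p z - 1‖ ≤ 0.435 := by
    intro z hz
    have h1 := p_close_to_one p hpN hp0 hb z hz
    have h2 : ‖z‖ < 1 := mem_ball_zero_iff.1 hz
    have h3 : Real.sin 1 / 2 ≤ 0.435 := by linarith [sin_one_bound]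
    nlinarith [norm_nonneg z]
  set winv : ℂ → ℂ := fun ζ =>
    if h : ‖ζ - 1‖ ≤ 0.435 then Classical.choose (exists_coshSqrt_preimage ζ h) else 0
    with hwinv_def
  have hwinv_spec : ∀ ζ, ∀ h : ‖ζ - 1‖ ≤ 0.435, ‖winv ζ‖ ≤ 97/100 ∧ coshSqrt (winv ζ) = ζ := by
    intro ζ h
    rw [hwinv_def]
    simp only [dif_pos h]
    exact Classical.choose_spec (exists_coshSqrt_preimage ζ h)
  set w : ℂ → ℂ := fun z => winv (p z) with hw_def
  have hw_norm : ∀ z ∈ ball (0:ℂ) 1, ‖w z‖ ≤ 97/100 := fun z hz =>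
    (hwinv_spec _ (hclose z hz)).1
  have hw_eq : ∀ z ∈ ball (0:ℂ) 1, coshSqrt (w z) = p z := fun z hz =>
    (hwinv_spec _ (hclose z hz)).2
  have hw0 : w 0 = 0 := by
    have h1 : coshSqrt (w 0) = 1 := by rw [hw_eq 0 h01, hp0]
    have h60 : (2/5:ℝ) * ‖w 0 - 0‖ ≤ ‖coshSqrt (w 0) - coshSqrt 0‖ :=
      coshSqrt_lower (le_trans (hw_norm 0 h01) (by norm_num)) (by simp)
    rw [h1, coshSqrt_zero, sub_self, norm_zero, sub_zero] at h60
    have h61 : ‖w 0‖ ≤ 0 := by linarith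
    exact norm_le_zero_iff.1 h61
  have hw_cont : ∀ z₀ ∈ ball (0:ℂ) 1, ContinuousAt w z₀ := by
    intro z₀ hz₀
    have hz₀1 : ‖z₀‖ < 1 := mem_ball_zero_iff.1 hz₀
    rw [Metric.continuousAt_iff]
    intro ε hε
    have hpc : ContinuousAt p z₀ := (hpN z₀ hz₀).continuousAt
    rw [Metric.continuousAt_iff] at hpc
    obtain ⟨δ₁, hδ₁, hδ₁'⟩ := hpc ((1/5)*ε) (by positivity)
    refine ⟨min δ₁ (1 - ‖z₀‖), lt_min hδ₁ (by linarith), fun {z} hzd => ?_⟩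
    have hzd1 : dist z z₀ < δ₁ := lt_of_lt_of_le hzd (min_le_left _ _)
    have hzd2 : dist z z₀ < 1 - ‖z₀‖ := lt_of_lt_of_le hzd (min_le_right _ _)
    have hzball : z ∈ ball (0:ℂ) 1 := by
      rw [mem_ball_zero_iff]
      calc ‖z‖ = ‖(z - z₀) + z₀‖ := by rw [sub_add_cancel]
        _ ≤ ‖z - z₀‖ + ‖z₀‖ := norm_add_le _ _
        _ < 1 := by rw [dist_eq_norm] at hzd2; linarith
    have h6 := coshSqrt_lower (le_trans (hw_norm z hzball) (by norm_num))
      (le_trans (hw_norm z₀ hz₀) (by norm_num))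
    rw [hw_eq z hzball, hw_eq z₀ hz₀] at h6
    have h7 := hδ₁' hzd1
    rw [dist_eq_norm] at h7 ⊢
    linarith
  have hw_an : AnalyticOnNhd ℂ w (ball (0:ℂ) 1) := by
    intro z₀ hz₀
    have ha_norm : ‖w z₀‖ ≤ 97/100 := hw_norm z₀ hz₀
    have ha1 : ‖w z₀‖ < 1 := lt_of_le_of_lt ha_norm (by norm_num)
    have hFa : AnalyticAt ℂ coshSqrt (w z₀) := coshSqrt_analyticAt ha1
    obtain ⟨q, hq⟩ := hFa
    have hFa' : AnalyticAt ℂ coshSqrt (w z₀) := ⟨q, hq⟩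
    have hd : HasDerivAt coshSqrt (deriv coshSqrt (w z₀)) (w z₀) :=
      hFa'.differentiableAt.hasDerivAt
    have hE : HasDerivAt (fun x => coshSqrt x - 1 - x/2)
        (deriv coshSqrt (w z₀) - 1/2) (w z₀) := by
      have h1 := (hd.sub_const 1).sub ((hasDerivAt_id (w z₀)).div_const 2)
      exact h1
    have hlip : ∀ᶠ x in 𝓝 (w z₀), ‖(coshSqrt x - 1 - x/2) - (coshSqrt (w z₀) - 1 - (w z₀)/2)‖
        ≤ (1/10) * ‖x - w z₀‖ := by
      have hmem : ball (0:ℂ) 1 ∈ 𝓝 (w z₀) := isOpen_ball.mem_nhds (mem_ball_zero_iff.2 ha1)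
      filter_upwards [hmem] with x hx
      have hx1 : ‖x‖ ≤ 1 := le_of_lt (mem_ball_zero_iff.1 hx)
      have hdb := coshSqrt_diff_bound hx1 ha1.le
      have heq : (coshSqrt x - 1 - x/2) - (coshSqrt (w z₀) - 1 - (w z₀)/2)
          = coshSqrt x - coshSqrt (w z₀) - (x - w z₀)/2 := by ring
      rw [heq]
      exact hdb
    have hEnorm : ‖deriv coshSqrt (w z₀) - 1/2‖ ≤ 1/10 := by
      have hf := hE.hasFDerivAt
      have h1 := hf.le_of_lip' (by norm_num) hlip
      rw [ContinuousLinearMap.norm_toSpanSingleton] at h1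
      simpa using h1
    have hdlow : (2/5:ℝ) ≤ ‖deriv coshSqrt (w z₀)‖ := by
      have h1 : ‖(1/2:ℂ)‖ = 1/2 := by norm_num
      have h2 : ‖(1/2:ℂ)‖ - ‖(1/2:ℂ) - deriv coshSqrt (w z₀)‖ ≤ ‖deriv coshSqrt (w z₀)‖ := by
        have := norm_sub_norm_le (1/2:ℂ) ((1/2:ℂ) - deriv coshSqrt (w z₀))
        simpa using this
      rw [norm_sub_rev] at hEnorm
      linarith
    have hdne : deriv coshSqrt (w z₀) ≠ 0 := by
      intro h0
      rw [h0, norm_zero] at hdlow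
      linarith
    have hstrict : HasStrictDerivAt coshSqrt (deriv coshSqrt (w z₀)) (w z₀) :=
      hq.deriv ▸ hq.hasStrictDerivAt
    have hFd := hstrict.hasStrictFDerivAt_equiv hdne
    set Φ := HasStrictFDerivAt.toOpenPartialHomeomorph coshSqrt hFd with hΦ_def
    have hΦcoe : ⇑Φ = coshSqrt := hFd.toOpenPartialHomeomorph_coe
    have hΦsrc : w z₀ ∈ Φ.source := hFd.mem_toOpenPartialHomeomorph_source
    have hq1 : q 1 = (continuousMultilinearCurryFin1 ℂ ℂ ℂ).symm
        ↑(ContinuousLinearEquiv.unitsEquivAut ℂ (Units.mk0 _ hdne)) := by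
      apply ContinuousMultilinearMap.ext
      intro m
      have hm : m = fun _ : Fin 1 => m 0 := funext fun i => by
        rw [Subsingleton.elim i 0]
      rw [continuousMultilinearCurryFin1_symm_apply]
      conv_lhs => rw [hm]
      rw [FormalMultilinearSeries.apply_eq_pow_smul_coeff]
      have hco : q.coeff 1 = deriv coshSqrt (w z₀) := hq.deriv.symm
      rw [hco, ContinuousLinearEquiv.coe_coe, ContinuousLinearEquiv.unitsEquivAut_apply]
      rw [pow_one, smul_eq_mul, Units.val_mk0]
    have hqΦ : HasFPowerSeriesAt (⇑Φ) q (w z₀) := hΦcoe ▸ hq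
    have hsymm := Φ.hasFPowerSeriesAt_symm hΦsrc hqΦ hq1
    have hΦa : Φ (w z₀) = p z₀ := by
      have : Φ (w z₀) = coshSqrt (w z₀) := congrFun hΦcoe (w z₀)
      rw [this, hw_eq z₀ hz₀]
    have hsymm_an : AnalyticAt ℂ (⇑Φ.symm) (p z₀) := hΦa ▸ ⟨_, hsymm⟩
    have hev : ∀ᶠ z in 𝓝 z₀, w z ∈ Φ.source :=
      (hw_cont z₀ hz₀).preimage_mem_nhds (Φ.open_source.mem_nhds hΦsrc)
    have hev2 : ∀ᶠ z in 𝓝 z₀, z ∈ ball (0:ℂ) 1 := isOpen_ball.mem_nhds hz₀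
    have heq : (fun z => Φ.symm (p z)) =ᶠ[nhds z₀] w := by
      filter_upwards [hev, hev2] with z h1 h2
      have h3 : p z = Φ (w z) := by
        have : Φ (w z) = coshSqrt (w z) := congrFun hΦcoe (w z)
        rw [this, hw_eq z h2]
      show Φ.symm (p z) = w z
      rw [h3]
      exact Φ.left_inv h1
    exact (hsymm_an.comp (hpN z₀ hz₀)).congr heq
  refine ⟨w, hw_an.analyticOn, hw0, fun z hz => ?_, fun z hz => (hw_eq z hz).symm⟩
  exact mem_ball_zero_iff.2 (lt_of_le_of_lt (hw_norm z hz) (by norm_num))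
end

section
/- Let $p$ be analytic and non-vanishing in the unit disc $\mathbb{D}$ with $p(0)=1$. If $\left|\frac{z p'(z)}{p(z)^2} - 1 + 1\right| = \left|\frac{z p'(z)}{p(z)^2}\right| < \frac{1}{2}\operatorname{sech} 1 \tanh 1$ for all $z \in \mathbb{D}$ (equivalently $|1 + zp'(z)/p(z)^2 - 1| < \frac{\sinh 1}{2\cosh^2 1}$), then $p(z) \prec \cosh\sqrt{z}$. -/
open Metric

/-!
The hypothesis gives `‖z (1/p)'(z)‖ ≤ 1/4` (since `sinh 1 / (2 cosh² 1) ≤ 1/4` is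
`(sinh 1 - 1)² ≥ 0`), so the Schwarz lemma bounds `(1/p)'` by `1/4` and `p` maps the disc
into `ball 1 (1/3)`. On that ball `cosh √·` has an explicit holomorphic inverse
`c ↦ (8 arcosh s)²`, where `s = cosh (arcosh c / 8)` is obtained by three half-angle square
roots and `arcosh s = log (s + √(s² - 1))`. After three halvings `s` is within `1/171` of `1`,
which keeps `‖arcosh s‖ < 1/8` and hence the inverse inside the unit disc. The branch of
`√(s² - 1)` only changes the sign of `arcosh s`, so the inverse is holomorphic away from
`c = 1`, where the singularity is removable.
-/

open Complex Set Filter Topology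

theorem Real.sinh_div_two_mul_cosh_sq_le (x : ℝ) : sinh x / (2 * cosh x ^ 2) ≤ 1 / 4 := by
  rw [div_le_iff₀ (by positivity), cosh_sq]
  nlinarith [sq_nonneg (sinh x - 1)]

theorem norm_sub_one_lt_of_norm_inv_sub_one_lt {a : ℂ} {r : ℝ} (hr : r < 1)
    (ha : ‖a⁻¹ - 1‖ < r) : ‖a - 1‖ < r / (1 - r) := by
  have ha0 : a ≠ 0 := by
    rintro rfl
    rw [inv_zero, zero_sub, norm_neg, norm_one] at ha
    linarith
  have hinv : 1 - r < ‖a‖⁻¹ := by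
    rw [← norm_inv]
    linarith [norm_sub_norm_le (1 : ℂ) a⁻¹, norm_sub_rev (1 : ℂ) a⁻¹,
      norm_one (α := ℂ)]
  have hnorm : ‖a‖ * (1 - r) < 1 := by
    have := mul_lt_mul_of_pos_left hinv (norm_pos_iff.2 ha0)
    rwa [mul_inv_cancel₀ (norm_ne_zero_iff.2 ha0)] at this
  have hfac : a - 1 = a * -(a⁻¹ - 1) := by field_simp; ring
  rw [lt_div_iff₀ (by linarith), hfac, norm_mul, norm_neg]
  nlinarith [norm_nonneg a, norm_nonneg (a⁻¹ - 1)]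

theorem norm_sub_le_of_norm_mul_deriv_le {f : ℂ → ℂ} {C : ℝ}
    (hf : DifferentiableOn ℂ f (ball 0 1)) (hC : ∀ z ∈ ball (0 : ℂ) 1, ‖z * deriv f z‖ ≤ C)
    {z : ℂ} (hz : z ∈ ball (0 : ℂ) 1) : ‖f z - f 0‖ ≤ C * ‖z‖ := by
  set g : ℂ → ℂ := fun w => w * deriv f w
  have hf' : DifferentiableOn ℂ (deriv f) (ball 0 1) := hf.deriv isOpen_ball
  have hg : DifferentiableOn ℂ g (ball 0 1) := differentiableOn_id.mul hf'
  have hmaps : MapsTo g (ball 0 1) (closedBall (g 0) C) := fun w hw => by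
    simpa [g] using hC w hw
  have hdslope : ∀ w ∈ ball (0 : ℂ) 1, dslope g 0 w = deriv f w := by
    intro w hw
    rcases eq_or_ne w 0 with rfl | hw0
    · rw [dslope_same]
      simpa using ((hasDerivAt_id' (0 : ℂ)).fun_mul
        (hf'.differentiableAt (isOpen_ball.mem_nhds hw)).hasDerivAt).deriv
    · rw [dslope_of_ne _ hw0, slope_def_field]
      field_simp
      simp [g]
  have hderiv : ∀ w ∈ ball (0 : ℂ) 1, ‖deriv f w‖ ≤ C := fun w hw => by
    simpa [hdslope w hw] using Complex.norm_dslope_le_div_of_mapsTo_ball hg hmaps hw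
  simpa using (convex_ball (0 : ℂ) 1).norm_image_sub_le_of_norm_deriv_le
    (fun w hw => hf.differentiableAt (isOpen_ball.mem_nhds hw)) hderiv
    (mem_ball_self one_pos) hz

theorem norm_sub_one_lt_of_norm_mul_deriv_div_sq_le {p : ℂ → ℂ}
    (hp : DifferentiableOn ℂ p (ball 0 1)) (hp0 : p 0 = 1) (hpne : ∀ z ∈ ball (0 : ℂ) 1, p z ≠ 0)
    (hb : ∀ z ∈ ball (0 : ℂ) 1, ‖z * deriv p z / p z ^ 2‖ ≤ 1 / 4)
    {z : ℂ} (hz : z ∈ ball (0 : ℂ) 1) : ‖p z - 1‖ < 1 / 3 := by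
  have hderiv : ∀ w ∈ ball (0 : ℂ) 1,
      w * deriv (fun u => (p u)⁻¹) w = -(w * deriv p w / p w ^ 2) := fun w hw => by
    rw [((hp.differentiableAt (isOpen_ball.mem_nhds hw)).hasDerivAt.fun_inv (hpne w hw)).deriv]
    ring
  have hinv := norm_sub_le_of_norm_mul_deriv_le (f := fun u => (p u)⁻¹)
    (hp.inv hpne) (fun w hw => by rw [hderiv w hw, norm_neg]; exact hb w hw) hz
  simp only [hp0, inv_one] at hinv
  have hz1 : ‖z‖ < 1 := mem_ball_zero_iff.1 hz
  convert norm_sub_one_lt_of_norm_inv_sub_one_lt (a := p z) (by norm_num : (1 / 4 : ℝ) < 1)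
    (by nlinarith [norm_nonneg z]) using 1
  norm_num

theorem coshSqrt_sq (v : ℂ) : coshSqrt (v ^ 2) = cosh v := by
  simpa [coshSqrt, ← pow_mul] using (hasSum_cosh v).tsum_eq

theorem Complex.sq_sqrt (x : ℂ) : sqrt x ^ 2 = x := cpow_ofNat_inv_pow x 2

noncomputable def halfCosh (c : ℂ) : ℂ := sqrt ((1 + c) / 2)

theorem halfCosh_sq (c : ℂ) : halfCosh c ^ 2 = (1 + c) / 2 := sq_sqrt _

@[simp] theorem halfCosh_one : halfCosh 1 = 1 := by norm_num [halfCosh]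

theorem eq_one_of_halfCosh_eq_one {c : ℂ} (h : halfCosh c = 1) : c = 1 := by
  have := halfCosh_sq c
  rw [h] at this
  linear_combination -2 * this

theorem re_halfCosh_nonneg (c : ℂ) : 0 ≤ (halfCosh c).re := by
  rw [halfCosh, sqrt, cpow_inv_two_re]
  positivity

theorem cosh_two_mul_eq_of_cosh_eq_halfCosh {u c : ℂ} (h : cosh u = halfCosh c) :
    cosh (2 * u) = c := by
  linear_combination
    cosh_two_mul u - cosh_sq u + 2 * (cosh u + halfCosh c) * h + 2 * halfCosh_sq c

theorem norm_halfCosh_sub_one_le {c : ℂ} {r : ℝ} (hc : ‖c - 1‖ ≤ r) (hr : r < 4) :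
    ‖halfCosh c - 1‖ ≤ r / (4 - r) := by
  set s := halfCosh c
  have hfac : ‖s - 1‖ * ‖s + 1‖ = ‖c - 1‖ / 2 := by
    rw [← norm_mul, show (s - 1) * (s + 1) = (c - 1) / 2 by linear_combination halfCosh_sq c]
    simp
  have hplus : 1 ≤ ‖s + 1‖ := by
    have := abs_re_le_norm (s + 1)
    rw [add_re, one_re, abs_of_nonneg (by linarith [re_halfCosh_nonneg c])] at this
    linarith [re_halfCosh_nonneg c]
  have hminus : ‖s - 1‖ ≤ r / 2 := by nlinarith [norm_nonneg (s - 1)]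
  have hplus' : 2 - r / 2 ≤ ‖s + 1‖ := by
    have h2 := norm_sub_le (s + 1) (s - 1)
    rw [show s + 1 - (s - 1) = 2 by ring] at h2
    rw [show ‖(2 : ℂ)‖ = 2 by norm_num] at h2
    linarith
  rw [le_div_iff₀ (by linarith)]
  nlinarith [norm_nonneg (s - 1)]

theorem mapsTo_halfCosh_ball : MapsTo halfCosh (ball 1 1) (ball 1 1) := fun c hc => by
  rw [mem_ball_iff_norm] at hc ⊢
  have h := norm_halfCosh_sub_one_le le_rfl (hc.trans (by norm_num))
  rw [le_div_iff₀ (by linarith)] at h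
  nlinarith [norm_nonneg (halfCosh c - 1)]

theorem differentiableOn_halfCosh : DifferentiableOn ℂ halfCosh (ball 1 1) := fun c hc => by
  refine ((differentiableAt_sqrt ?_).comp c
    ((differentiableAt_id.const_add 1).div_const 2)).differentiableWithinAt
  rw [mem_ball_iff_norm] at hc
  convert mem_slitPlane_of_norm_lt_one (z := (c - 1) / 2) (by rw [norm_div]; norm_num; linarith)
    using 1
  ring

noncomputable def eighthCosh (c : ℂ) : ℂ := halfCosh (halfCosh (halfCosh c))

@[simp] theorem eighthCosh_one : eighthCosh 1 = 1 := by simp [eighthCosh]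

theorem eq_one_of_eighthCosh_sq_eq_one {c : ℂ} (h : eighthCosh c ^ 2 = 1) : c = 1 := by
  rw [eighthCosh, halfCosh_sq] at h
  exact eq_one_of_halfCosh_eq_one <| eq_one_of_halfCosh_eq_one <| by linear_combination 2 * h

theorem cosh_eight_mul_eq_of_cosh_eq_eighthCosh {u c : ℂ} (h : cosh u = eighthCosh c) :
    cosh (8 * u) = c := by
  rw [show 8 * u = 2 * (2 * (2 * u)) by ring]
  exact cosh_two_mul_eq_of_cosh_eq_halfCosh <| cosh_two_mul_eq_of_cosh_eq_halfCosh <|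
    cosh_two_mul_eq_of_cosh_eq_halfCosh h

theorem differentiableOn_eighthCosh : DifferentiableOn ℂ eighthCosh (ball 1 1) :=
  differentiableOn_halfCosh.comp (differentiableOn_halfCosh.comp differentiableOn_halfCosh
    mapsTo_halfCosh_ball) (mapsTo_halfCosh_ball.comp mapsTo_halfCosh_ball)

theorem norm_eighthCosh_sub_one_le {c : ℂ} (hc : ‖c - 1‖ ≤ 1 / 3) :
    ‖eighthCosh c - 1‖ ≤ 1 / 171 := by
  have h1 := norm_halfCosh_sub_one_le hc (by norm_num)
  have h2 := norm_halfCosh_sub_one_le (r := 1 / 11) (h1.trans_eq (by norm_num)) (by norm_num)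
  have h3 := norm_halfCosh_sub_one_le (r := 1 / 43) (h2.trans_eq (by norm_num)) (by norm_num)
  exact h3.trans_eq (by norm_num)

theorem cosh_log_add_of_sq_eq {s t : ℂ} (ht : t ^ 2 = s ^ 2 - 1) : cosh (log (s + t)) = s := by
  have hst : (s + t) * (s - t) = 1 := by linear_combination -ht
  have hne : s + t ≠ 0 := left_ne_zero_of_mul_eq_one hst
  have h := two_cosh (log (s + t))
  rw [exp_neg, exp_log hne, inv_eq_of_mul_eq_one_right hst] at h
  linear_combination h / 2

theorem sq_log_add_eq_of_sq_eq {s t t' : ℂ} (ht : t ^ 2 = s ^ 2 - 1) (ht' : t' ^ 2 = t ^ 2)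
    (hst : s + t ∈ slitPlane) : log (s + t') ^ 2 = log (s + t) ^ 2 := by
  rcases sq_eq_sq_iff_eq_or_eq_neg.1 ht' with rfl | rfl
  · rfl
  · have hinv : s + -t = (s + t)⁻¹ :=
      (inv_eq_of_mul_eq_one_right (by linear_combination -ht)).symm
    rw [hinv, log_inv _ (slitPlane_arg_ne_pi hst), neg_sq]

theorem norm_add_sub_one_lt {s t : ℂ} (hs : ‖s - 1‖ ≤ 1 / 171) (ht : t ^ 2 = s ^ 2 - 1) :
    ‖s + t - 1‖ < 23 / 200 := by
  have hsq : ‖t‖ ^ 2 = ‖s - 1‖ * ‖s + 1‖ := by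
    rw [← norm_pow, ht, ← norm_mul]
    ring_nf
  have hplus : ‖s + 1‖ ≤ ‖s - 1‖ + 2 := by
    simpa [show s + 1 = s - 1 + 2 by ring] using norm_add_le (s - 1) 2
  have htnorm : ‖t‖ < 1087 / 10000 := by
    nlinarith [norm_nonneg t, norm_nonneg (s - 1), norm_nonneg (s + 1)]
  calc ‖s + t - 1‖ = ‖(s - 1) + t‖ := by ring_nf
    _ ≤ ‖s - 1‖ + ‖t‖ := norm_add_le _ _
    _ < 23 / 200 := by linarith

theorem add_mem_slitPlane {s t : ℂ} (hs : ‖s - 1‖ ≤ 1 / 171) (ht : t ^ 2 = s ^ 2 - 1) :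
    s + t ∈ slitPlane :=
  ball_one_subset_slitPlane <| mem_ball_iff_norm.2 <|
    (norm_add_sub_one_lt hs ht).trans (by norm_num)

-- `23/200` lies just below the root `≈ 0.117` of `a + a² / (2 (1 - a)) = 1/8`.
theorem norm_log_lt_of_norm_sub_one_lt {x : ℂ} (hx : ‖x - 1‖ < 23 / 200) : ‖log x‖ < 1 / 8 := by
  have h := norm_log_one_add_le (z := x - 1) (hx.trans (by norm_num))
  rw [add_sub_cancel] at h
  refine h.trans_lt ?_
  have h1 : 0 < 1 - ‖x - 1‖ := by linarith
  rw [← div_eq_mul_inv, div_div, div_add' _ _ _ (by positivity), div_lt_iff₀ (by positivity)]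
  nlinarith [norm_nonneg (x - 1)]

theorem exists_differentiableAt_sqrt_forall_sq_eq {x : ℂ} (hx : x ≠ 0) :
    ∃ τ : ℂ → ℂ, DifferentiableAt ℂ τ x ∧ ∀ y, τ y ^ 2 = y := by
  rcases mem_slitPlane_or_neg_mem_slitPlane hx with hx | hx
  · exact ⟨sqrt, differentiableAt_sqrt hx, sq_sqrt⟩
  · refine ⟨fun y => I * sqrt (-y),
      ((differentiableAt_sqrt hx).comp x differentiableAt_id.neg).const_mul I, fun y => ?_⟩
    rw [mul_pow, sq_sqrt, I_sq]
    ring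

noncomputable def coshSqrtInv (c : ℂ) : ℂ :=
  (8 * log (eighthCosh c + sqrt (eighthCosh c ^ 2 - 1))) ^ 2

theorem coshSqrt_coshSqrtInv (c : ℂ) : coshSqrt (coshSqrtInv c) = c := by
  rw [coshSqrtInv, coshSqrt_sq]
  exact cosh_eight_mul_eq_of_cosh_eq_eighthCosh (cosh_log_add_of_sq_eq (sq_sqrt _))

@[simp] theorem coshSqrtInv_one : coshSqrtInv 1 = 0 := by simp [coshSqrtInv]

theorem norm_coshSqrtInv_lt_one {c : ℂ} (hc : ‖c - 1‖ < 1 / 3) : ‖coshSqrtInv c‖ < 1 := by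
  have h := norm_log_lt_of_norm_sub_one_lt <|
    norm_add_sub_one_lt (norm_eighthCosh_sub_one_le hc.le) (sq_sqrt _)
  rw [coshSqrtInv, norm_pow, norm_mul]
  norm_num
  nlinarith [norm_nonneg (log (eighthCosh c + sqrt (eighthCosh c ^ 2 - 1)))]

theorem continuousAt_coshSqrtInv_one : ContinuousAt coshSqrtInv 1 := by
  have hs : ContinuousAt eighthCosh 1 :=
    (differentiableOn_eighthCosh.differentiableAt (ball_mem_nhds 1 one_pos)).continuousAt
  have ht : ContinuousAt (fun c => sqrt (eighthCosh c ^ 2 - 1)) 1 :=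
    (continuousAt_sqrt (z := 0) (by simp)).comp_of_eq ((hs.pow 2).sub continuousAt_const)
      (by simp)
  exact (((hs.add ht).clog (by simp)).const_mul 8).pow 2

theorem differentiableAt_coshSqrtInv {c : ℂ} (hc : ‖c - 1‖ < 1 / 3) (hc1 : c ≠ 1) :
    DifferentiableAt ℂ coshSqrtInv c := by
  have hs : DifferentiableAt ℂ eighthCosh c :=
    differentiableOn_eighthCosh.differentiableAt
      (isOpen_ball.mem_nhds (mem_ball_iff_norm.2 (hc.trans (by norm_num))))
  obtain ⟨τ, hτ, hτ_sq⟩ := exists_differentiableAt_sqrt_forall_sq_eq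
    (sub_ne_zero.2 fun h => hc1 (eq_one_of_eighthCosh_sq_eq_one h))
  have heq : coshSqrtInv =ᶠ[𝓝 c]
      fun c' => (8 * log (eighthCosh c' + τ (eighthCosh c' ^ 2 - 1))) ^ 2 := by
    filter_upwards [isOpen_ball.mem_nhds (mem_ball_iff_norm.2 hc)] with c' hc'
    have hs' := norm_eighthCosh_sub_one_le (mem_ball_iff_norm.1 hc').le
    rw [coshSqrtInv, mul_pow, mul_pow, sq_log_add_eq_of_sq_eq (t' := τ (eighthCosh c' ^ 2 - 1))
      (sq_sqrt _) (by rw [hτ_sq, sq_sqrt]) (add_mem_slitPlane hs' (sq_sqrt _))]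
  have hslit := add_mem_slitPlane (norm_eighthCosh_sub_one_le hc.le) (hτ_sq _)
  exact heq.differentiableAt_iff.2
    ((((hs.add (hτ.comp c ((hs.pow 2).sub_const 1))).clog hslit).const_mul 8).pow 2)

theorem differentiableOn_coshSqrtInv : DifferentiableOn ℂ coshSqrtInv (ball 1 (1 / 3)) := by
  refine (differentiableOn_compl_singleton_and_continuousAt_iff
    (ball_mem_nhds 1 (by norm_num))).1 ⟨fun c hc => ?_, continuousAt_coshSqrtInv_one⟩
  exact (differentiableAt_coshSqrtInv (mem_ball_iff_norm.1 hc.1) hc.2).differentiableWithinAt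

theorem subordination_of_deriv_sq_bound (p : ℂ → ℂ)
    (hp : AnalyticOn ℂ p (ball (0:ℂ) 1)) (hp0 : p 0 = 1)
    (hpne : ∀ z ∈ ball (0:ℂ) 1, p z ≠ 0)
    (hb : ∀ z ∈ ball (0:ℂ) 1, ‖z * deriv p z / (p z) ^ 2‖ < Real.sinh 1 / (2 * Real.cosh 1 ^ 2)) :
    Subordinate p coshSqrt := by
  have hmaps : MapsTo p (ball 0 1) (ball 1 (1 / 3)) := fun z hz =>
    mem_ball_iff_norm.2 <| norm_sub_one_lt_of_norm_mul_deriv_div_sq_le hp.differentiableOn hp0 hpne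
      (fun w hw => (hb w hw).le.trans (Real.sinh_div_two_mul_cosh_sq_le 1)) hz
  refine ⟨coshSqrtInv ∘ p, ?_, by simp [hp0], fun z hz => ?_, fun z _ => ?_⟩
  · exact ((differentiableOn_coshSqrtInv.comp hp.differentiableOn hmaps).analyticOnNhd
      isOpen_ball).analyticOn
  · exact mem_ball_zero_iff.2 (norm_coshSqrtInv_lt_one (mem_ball_iff_norm.1 (hmaps hz)))
  · exact (coshSqrt_coshSqrtInv (p z)).symm
end

section
/- Let $\eta, \gamma \in \mathbb{R}$ with $\gamma + \eta\cosh 1 \ne 0$ and $-\frac{\gamma}{\cosh 1} \le \eta \le -\frac{\gamma}{\cosh 1} + \frac{\sinh 1}{2\cosh 1(1+\sqrt{2}-\cosh 1)}$. Then for every $k \ge 1$: $\left(k(\eta\sinh 2 + 2\gamma\sinh 1) - 4(1-\cosh 1)(\gamma + \eta\cosh 1)^2\right)^2 \ge 32(\gamma + \eta\cosh 1)^4$. -/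
theorem F_zero_nonneg (η γ : ℝ) (hne : γ + η * Real.cosh 1 ≠ 0)
    (h1 : -γ / Real.cosh 1 ≤ η)
    (h2 : η ≤ -γ / Real.cosh 1 +
      Real.sinh 1 / (2 * Real.cosh 1 * (1 + Real.sqrt 2 - Real.cosh 1))) :
    ∀ k : ℝ, 1 ≤ k →
      32 * (γ + η * Real.cosh 1) ^ 4 ≤
        (k * (η * Real.sinh 2 + 2 * γ * Real.sinh 1) -
          4 * (1 - Real.cosh 1) * (γ + η * Real.cosh 1) ^ 2) ^ 2 := by
  intro k hk
  set c := Real.cosh 1 with hc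
  set s := Real.sinh 1 with hs
  have hc1 : 1 < c := Real.one_lt_cosh.mpr one_ne_zero
  have hcpos : 0 < c := by linarith
  have hs1 : 0 < s := Real.sinh_pos_iff.mpr one_pos
  have hsq : Real.sqrt 2 ^ 2 = 2 := Real.sq_sqrt (by norm_num)
  have hsqrt1 : 1 ≤ Real.sqrt 2 := by nlinarith [Real.sqrt_nonneg 2]
  have hclt : c < 2 := by
    have he : Real.exp 1 < 2.7182818286 := Real.exp_one_lt_d9
    have he' : Real.exp (-1) < 1 := by
      rw [show (1:ℝ) = Real.exp 0 by simp]; exact Real.exp_lt_exp.mpr (by norm_num)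
    have hceq : c = (Real.exp 1 + Real.exp (-1)) / 2 := by rw [hc, Real.cosh_eq]
    rw [hceq]; linarith
  have hD : 0 < 1 + Real.sqrt 2 - c := by linarith
  set A := γ + η * c with hA
  have hA0 : 0 ≤ A := by
    have := (div_le_iff₀ hcpos).mp h1
    nlinarith
  have hApos : 0 < A := lt_of_le_of_ne hA0 (Ne.symm hne)
  have key : 2 * A * (1 + Real.sqrt 2 - c) ≤ s := by
    have hAc : A / c = η + γ / c := by rw [hA]; field_simp; ring
    have h2' : A / c ≤ s / (2 * c * (1 + Real.sqrt 2 - c)) := by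
      have hng : -γ / c = -(γ / c) := neg_div c γ
      rw [hAc]; rw [hng] at h2; linarith
    have h2cD : 0 < 2 * c * (1 + Real.sqrt 2 - c) := by positivity
    have hmul := (div_le_div_iff₀ hcpos h2cD).mp h2'
    nlinarith [hmul, hcpos]
  have hsinh2 : Real.sinh 2 = 2 * s * c := by
    have := Real.sinh_two_mul 1
    rw [hs, hc]; norm_num at this ⊢; linarith
  have hB : η * Real.sinh 2 + 2 * γ * s = 2 * s * A := by
    rw [hsinh2, hA]; ring
  rw [hB]
  have hinner : 4 * Real.sqrt 2 * A ^ 2 ≤ k * (2 * s * A) - 4 * (1 - c) * A ^ 2 := by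
    have h1' : 2 * s * A ≤ k * (2 * s * A) := by
      nlinarith [mul_nonneg (by linarith : (0:ℝ) ≤ k - 1) (le_of_lt (mul_pos hs1 hApos))]
    nlinarith [mul_le_mul_of_nonneg_left key (le_of_lt hApos)]
  have h0 : 0 ≤ 4 * Real.sqrt 2 * A ^ 2 := by positivity
  nlinarith [mul_le_mul hinner hinner h0 (le_trans h0 hinner), hsq]
end

section
/- Let $\eta, \gamma \in \mathbb{R}$ with $\gamma + \eta\cos 1 \ne 0$ and $-\frac{\gamma}{\cos 1} - \frac{\sin 1}{2\cos 1(1 + \sqrt{2} - \cos 1)} \le \eta \le -\frac{\gamma}{\cos 1}$. Then for every $k \ge 1$: $\left(k(\eta\sin 2 + 2\gamma\sin 1) - 4(\cos 1 - 1)(\gamma + \eta\cos 1)^2\right)^2 \ge 32(\gamma + \eta\cos 1)^4$. -/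
theorem F_pi_half_nonneg (η γ : ℝ) (hne : γ + η * Real.cos 1 ≠ 0)
    (h1 : -γ / Real.cos 1 -
      Real.sin 1 / (2 * Real.cos 1 * (1 + Real.sqrt 2 - Real.cos 1)) ≤ η)
    (h2 : η ≤ -γ / Real.cos 1) :
    ∀ k : ℝ, 1 ≤ k →
      32 * (γ + η * Real.cos 1) ^ 4 ≤
        (k * (η * Real.sin 2 + 2 * γ * Real.sin 1) -
          4 * (Real.cos 1 - 1) * (γ + η * Real.cos 1) ^ 2) ^ 2 := by
  intro k hk
  have hc : (0:ℝ) < Real.cos 1 := Real.cos_pos_of_mem_Ioo ⟨by linarith [Real.pi_gt_three], by linarith [Real.pi_gt_three]⟩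
  have hc1 : Real.cos 1 < 1 := by
    have := Real.cos_one_le
    linarith
  have hs : (0:ℝ) < Real.sin 1 :=
    Real.sin_pos_of_pos_of_lt_pi one_pos (by linarith [Real.pi_gt_three])
  have hsq2 : Real.sqrt 2 ^ 2 = 2 := Real.sq_sqrt (by norm_num)
  have hsq2' : (1:ℝ) ≤ Real.sqrt 2 := by
    nlinarith [Real.sqrt_nonneg 2]
  set c := Real.cos 1
  set s := Real.sin 1
  set d := 1 + Real.sqrt 2 - c with hd
  have hdpos : (0:ℝ) < d := by simp only [hd]; nlinarith
  set B := -(γ + η * c) with hB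
  have hB0 : 0 ≤ B := by
    have := (le_div_iff₀ hc).mp h2
    simp only [hB]; linarith
  have hBs : 2 * d * B ≤ s := by
    have h1' : (-γ / c - s / (2 * c * d)) * c ≤ η * c :=
      mul_le_mul_of_nonneg_right h1 hc.le
    have e1 : -γ / c * c = -γ := by field_simp
    have e2 : s / (2 * c * d) * c = s / (2 * d) := by
      field_simp
    have : -γ - s / (2 * d) ≤ η * c := by
      calc -γ - s / (2 * d) = (-γ / c - s / (2 * c * d)) * c := by
            rw [sub_mul, e1, e2]
        _ ≤ η * c := h1'
    have hB' : B ≤ s / (2 * d) := by simp only [hB]; linarith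
    calc 2 * d * B ≤ 2 * d * (s / (2 * d)) :=
          mul_le_mul_of_nonneg_left hB' (by linarith)
      _ = s := by field_simp
  have hsin2 : Real.sin 2 = 2 * s * c := by
    have : (2:ℝ) = 2 * 1 := by norm_num
    rw [this, Real.sin_two_mul]; ring
  rw [hsin2]
  have hEA : k * (η * (2 * s * c) + 2 * γ * s) - 4 * (c - 1) * (γ + η * c) ^ 2
      = -(2 * k * s * B - 4 * (1 - c) * B ^ 2) := by
    simp only [hB]; ring
  have hA4 : (γ + η * c) ^ 4 = B ^ 4 := by simp only [hB]; ring
  rw [hEA, hA4]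
  have key : 4 * Real.sqrt 2 * B ^ 2 ≤ 2 * k * s * B - 4 * (1 - c) * B ^ 2 := by
    have h1 : 2 * d * B * B ≤ s * B := mul_le_mul_of_nonneg_right hBs hB0
    have h2 : 2 * s * B ≤ 2 * k * s * B := by nlinarith [mul_nonneg hs.le hB0]
    simp only [hd] at h1
    nlinarith
  nlinarith [sq_nonneg B, sq_nonneg (2 * k * s * B - 4 * (1 - c) * B ^ 2 - 4 * Real.sqrt 2 * B ^ 2), mul_nonneg (mul_nonneg (by norm_num : (0:ℝ) ≤ 4) (Real.sqrt_nonneg 2)) (sq_nonneg B)]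
end
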